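/- arXiv:1912.02265 — 7 statements merged into one kernel-verified Lean document; each statement's English description precedes it below -/
import Mathlib

section
/- Let G be a block graph (a graph whose every connected component is a 1-clique sum of complete graphs). Then for any two vertices i and j in the same connected component of G, there exists a unique shortest path in G connecting them. -/
/-!
Induct on the clique-sum decomposition of a component, proving that inside each piece
shortest paths are unique. In a clique a shortest path has length at most one. For a sum
`A ∪ B ∪ {c}`, a path with both ends in `A ∪ {c}` stays there, as otherwise it would pass
through the cut vertex `c` twice; and a shortest path from `A` to `B` must pass through `c`,
where it splits into shortest paths inside `A ∪ {c}` and inside `B ∪ {c}`.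
-/

/-- The induced subgraph of `G` on the vertex set `S` is a 1-clique sum of complete
graphs: either it is complete, or `S` splits as `A ∪ B ∪ {c}` where `{c}` separates
`A` from `B` inside `S` and the pieces `A ∪ {c}` and `B ∪ {c}` are again
1-clique sums of complete graphs. -/
inductive SimpleGraph.IsCliqueSumOfCompletes {V : Type*} (G : SimpleGraph V) : Set V → Prop
  | complete (S : Set V) (h : ∀ ⦃i⦄, i ∈ S → ∀ ⦃j⦄, j ∈ S → i ≠ j → G.Adj i j) :
      IsCliqueSumOfCompletes G S
  | sum (A B : Set V) (c : V) (hAB : Disjoint A B) (hcA : c ∉ A) (hcB : c ∉ B)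
      (hA : A.Nonempty) (hB : B.Nonempty)
      (hsep : ∀ a ∈ A, ∀ b ∈ B, ∀ w : G.Walk a b,
        (∀ x ∈ w.support, x ∈ A ∪ B ∪ {c}) → c ∈ w.support)
      (h1 : IsCliqueSumOfCompletes G (A ∪ {c}))
      (h2 : IsCliqueSumOfCompletes G (B ∪ {c})) :
      IsCliqueSumOfCompletes G (A ∪ B ∪ {c})

/-- A block graph: every connected component is a 1-clique sum of complete graphs. -/
def SimpleGraph.IsBlockGraph {V : Type*} (G : SimpleGraph V) : Prop :=
  ∀ v : V, G.IsCliqueSumOfCompletes {w | G.Reachable v w}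

namespace SimpleGraph

variable {V : Type*} {G : SimpleGraph V} {S T A B : Set V} {u v w c : V}

namespace Walk

lemma eq_of_length_eq_of_length_le_one {p q : G.Walk u v} (h : p.length = q.length)
    (hp : p.length ≤ 1) : p = q := by
  match p, q with
  | .nil, .nil => rfl
  | .cons _ .nil, .cons _ .nil => rfl
  | .nil, .cons _ _ => simp at h
  | .cons _ _, .nil => simp at h
  | .cons _ (.cons _ _), _ => simp at hp
  | .cons _ .nil, .cons _ (.cons _ _) => simp at h

lemma IsPath.eq_of_mem_support_takeUntil_of_mem_support_dropUntil [DecidableEq V]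
    {p : G.Walk u v} (hp : p.IsPath) (hw : w ∈ p.support)
    (h₁ : c ∈ (p.takeUntil w hw).support) (h₂ : c ∈ (p.dropUntil w hw).support) : c = w := by
  by_contra hcw
  have hnd := hp.support_nodup
  rw [← take_spec p hw, support_append] at hnd
  rw [← cons_tail_support] at h₂
  exact List.disjoint_of_nodup_append hnd h₁ ((List.mem_cons.mp h₂).resolve_left hcw)

def IsShortestIn (S : Set V) (p : G.Walk u v) : Prop :=
  (∀ x ∈ p.support, x ∈ S) ∧ ∀ q : G.Walk u v, (∀ x ∈ q.support, x ∈ S) → p.length ≤ q.length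

lemma IsShortestIn.length_eq {p q : G.Walk u v} (hp : p.IsShortestIn S)
    (hq : q.IsShortestIn S) : p.length = q.length :=
  (hp.2 q hq.1).antisymm (hq.2 p hp.1)

lemma IsShortestIn.of_subset {p : G.Walk u v} (hp : p.IsShortestIn S) (hTS : T ⊆ S)
    (hpT : ∀ x ∈ p.support, x ∈ T) : p.IsShortestIn T :=
  ⟨hpT, fun q hq => hp.2 q fun x hx => hTS (hq x hx)⟩

lemma IsShortestIn.takeUntil [DecidableEq V] {p : G.Walk u v} (hp : p.IsShortestIn S)
    (hw : w ∈ p.support) : (p.takeUntil w hw).IsShortestIn S := by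
  refine ⟨fun x hx => hp.1 x (support_takeUntil_subset_support p hw hx), fun q hq => ?_⟩
  have hlen := hp.2 (q.append (p.dropUntil w hw)) fun x hx => by
    rcases (mem_support_append_iff _ _).mp hx with hx | hx
    · exact hq x hx
    · exact hp.1 x (support_dropUntil_subset_support p hw hx)
  have hsplit := congrArg length (take_spec p hw)
  rw [length_append] at hlen hsplit
  omega

lemma IsShortestIn.dropUntil [DecidableEq V] {p : G.Walk u v} (hp : p.IsShortestIn S)
    (hw : w ∈ p.support) : (p.dropUntil w hw).IsShortestIn S := by
  refine ⟨fun x hx => hp.1 x (support_dropUntil_subset_support p hw hx), fun q hq => ?_⟩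
  have hlen := hp.2 ((p.takeUntil w hw).append q) fun x hx => by
    rcases (mem_support_append_iff _ _).mp hx with hx | hx
    · exact hp.1 x (support_takeUntil_subset_support p hw hx)
    · exact hq x hx
  have hsplit := congrArg length (take_spec p hw)
  rw [length_append] at hlen hsplit
  omega

lemma isShortestIn_of_length_eq_dist {p : G.Walk u v} (hp : p.length = G.dist u v) :
    p.IsShortestIn {x | G.Reachable u x} := by
  classical
  exact ⟨fun x hx => (p.takeUntil x hx).reachable, fun q _ => hp ▸ G.dist_le q⟩

end Walk

open Walk

variable (G) in
def shortestPathsIn (S : Set V) (u v : V) : Set (G.Walk u v) :=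
  {p | p.IsPath ∧ p.IsShortestIn S}

lemma IsClique.subsingleton_shortestPathsIn (hS : G.IsClique S) (u v : V) :
    (G.shortestPathsIn S u v).Subsingleton := by
  rintro p ⟨-, hp⟩ q ⟨-, hq⟩
  refine eq_of_length_eq_of_length_le_one (hp.length_eq hq) ?_
  have hu := hp.1 u p.start_mem_support
  have hv := hp.1 v p.end_mem_support
  by_cases huv : u = v
  · subst huv
    exact (hp.2 nil (by simpa using hu)).trans zero_le_one
  · exact hp.2 (cons (hS hu hv huv) nil) (by simp [hu, hv])

lemma eq_of_mem_shortestPathsIn_of_mem_support {p q : G.Walk u v}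
    (hp : p ∈ G.shortestPathsIn S u v) (hq : q ∈ G.shortestPathsIn S u v)
    (hcp : c ∈ p.support) (hcq : c ∈ q.support)
    (h₁ : (G.shortestPathsIn S u c).Subsingleton) (h₂ : (G.shortestPathsIn S c v).Subsingleton) :
    p = q := by
  classical
  rw [← take_spec p hcp, ← take_spec q hcq,
    h₁ ⟨hp.1.takeUntil hcp, hp.2.takeUntil hcp⟩ ⟨hq.1.takeUntil hcq, hq.2.takeUntil hcq⟩,
    h₂ ⟨hp.1.dropUntil hcp, hp.2.dropUntil hcp⟩ ⟨hq.1.dropUntil hcq, hq.2.dropUntil hcq⟩]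

variable (G) in
def Separates (c : V) (A B : Set V) : Prop :=
  ∀ a ∈ A, ∀ b ∈ B, ∀ w : G.Walk a b, (∀ x ∈ w.support, x ∈ A ∪ B ∪ {c}) → c ∈ w.support

lemma Separates.symm (h : G.Separates c A B) : G.Separates c B A := by
  intro b hb a ha p hp
  rw [Set.union_comm B A] at hp
  simpa using h a ha b hb p.reverse (by simpa using hp)

/-- A visit to `B` would force the path through `c` both before and after it. -/
lemma Separates.mem_of_mem_support_of_isPath (hsep : G.Separates c A B) (hcB : c ∉ B)
    (hu : u ∈ A ∪ {c}) (hv : v ∈ A ∪ {c}) {p : G.Walk u v} (hp : p.IsPath)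
    (hpS : ∀ x ∈ p.support, x ∈ A ∪ B ∪ {c}) : ∀ x ∈ p.support, x ∈ A ∪ {c} := by
  classical
  intro x hx
  rcases hpS x hx with (hxA | hxB) | hxc
  · exact Or.inl hxA
  · have hc₁ : c ∈ (p.takeUntil x hx).support := by
      rcases hu with huA | rfl
      · exact hsep u huA x hxB _ fun y hy => hpS y (support_takeUntil_subset_support p hx hy)
      · exact start_mem_support _
    have hc₂ : c ∈ (p.dropUntil x hx).support := by
      rcases hv with hvA | rfl
      · refine hsep.symm x hxB v hvA _ fun y hy => ?_
        rw [Set.union_comm B A]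
        exact hpS y (support_dropUntil_subset_support p hx hy)
      · exact end_mem_support _
    exact absurd (hp.eq_of_mem_support_takeUntil_of_mem_support_dropUntil hx hc₁ hc₂ ▸ hxB) hcB
  · exact Or.inr hxc

lemma Separates.subsingleton_shortestPathsIn_of_mem (hsep : G.Separates c A B) (hcB : c ∉ B)
    (hA : (G.shortestPathsIn (A ∪ {c}) u v).Subsingleton) (hu : u ∈ A ∪ {c})
    (hv : v ∈ A ∪ {c}) : (G.shortestPathsIn (A ∪ B ∪ {c}) u v).Subsingleton := by
  have hsub : A ∪ {c} ⊆ A ∪ B ∪ {c} := Set.union_subset_union_left _ Set.subset_union_left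
  rintro p ⟨hp, hps⟩ q ⟨hq, hqs⟩
  exact hA ⟨hp, hps.of_subset hsub (hsep.mem_of_mem_support_of_isPath hcB hu hv hp hps.1)⟩
    ⟨hq, hqs.of_subset hsub (hsep.mem_of_mem_support_of_isPath hcB hu hv hq hqs.1)⟩

lemma Separates.subsingleton_shortestPathsIn (hsep : G.Separates c A B) (hcA : c ∉ A)
    (hcB : c ∉ B) (hA : ∀ u v, (G.shortestPathsIn (A ∪ {c}) u v).Subsingleton)
    (hB : ∀ u v, (G.shortestPathsIn (B ∪ {c}) u v).Subsingleton) (u v : V) :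
    (G.shortestPathsIn (A ∪ B ∪ {c}) u v).Subsingleton := by
  have hside : ∀ {x y}, x ∈ A ∪ B ∪ {c} → y ∈ A ∪ B ∪ {c} → (x ∈ A → y ∉ B) →
      (x ∈ B → y ∉ A) → (G.shortestPathsIn (A ∪ B ∪ {c}) x y).Subsingleton := by
    intro x y hx hy hAB hBA
    have : (x ∈ A ∪ {c} ∧ y ∈ A ∪ {c}) ∨ (x ∈ B ∪ {c} ∧ y ∈ B ∪ {c}) := by
      simp only [Set.mem_union, Set.mem_singleton_iff] at *
      tauto
    rcases this with ⟨hxA, hyA⟩ | ⟨hxB, hyB⟩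
    · exact hsep.subsingleton_shortestPathsIn_of_mem hcB (hA x y) hxA hyA
    · rw [Set.union_comm A B]
      exact hsep.symm.subsingleton_shortestPathsIn_of_mem hcA (hB x y) hxB hyB
  have hcS : c ∈ A ∪ B ∪ {c} := Or.inr rfl
  intro p hp q hq
  have hu := hp.2.1 u p.start_mem_support
  have hv := hp.2.1 v p.end_mem_support
  by_cases hc : c ∈ p.support ∧ c ∈ q.support
  · exact eq_of_mem_shortestPathsIn_of_mem_support hp hq hc.1 hc.2
      (hside hu hcS (fun _ => hcB) fun _ => hcA) (hside hcS hv (absurd · hcA) (absurd · hcB))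
  · refine hside hu hv (fun huA hvB => hc ⟨?_, ?_⟩) (fun huB hvA => hc ⟨?_, ?_⟩) hp hq
    · exact hsep u huA v hvB p hp.2.1
    · exact hsep u huA v hvB q hq.2.1
    · exact hsep.symm u huB v hvA p (Set.union_comm A B ▸ hp.2.1)
    · exact hsep.symm u huB v hvA q (Set.union_comm A B ▸ hq.2.1)

theorem IsCliqueSumOfCompletes.subsingleton_shortestPathsIn (h : G.IsCliqueSumOfCompletes S)
    (u v : V) : (G.shortestPathsIn S u v).Subsingleton := by
  induction h generalizing u v with
  | complete S hS => exact IsClique.subsingleton_shortestPathsIn hS u v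
  | sum A B c _ hcA hcB _ _ hsep _ _ ihA ihB =>
    exact Separates.subsingleton_shortestPathsIn hsep hcA hcB ihA ihB u v

end SimpleGraph

theorem unique_shortest_path_of_blockGraph_general {V : Type*} (G : SimpleGraph V)
    (hG : G.IsBlockGraph) (i j : V) (hij : G.Reachable i j) :
    ∃! p : G.Walk i j, p.IsPath ∧ p.length = G.dist i j := by
  obtain ⟨p, hp, hpd⟩ := hij.exists_path_of_dist
  refine ⟨p, ⟨hp, hpd⟩, fun q ⟨hq, hqd⟩ => ?_⟩
  exact (hG i).subsingleton_shortestPathsIn i j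
    ⟨hq, SimpleGraph.Walk.isShortestIn_of_length_eq_dist hqd⟩
    ⟨hp, SimpleGraph.Walk.isShortestIn_of_length_eq_dist hpd⟩

/-- In a block graph, any two vertices in the same connected component are joined by a
unique shortest path. -/
theorem unique_shortest_path_of_blockGraph {V : Type*} [Fintype V] (G : SimpleGraph V)
    (hG : G.IsBlockGraph) (i j : V) (hij : G.Reachable i j) :
    ∃! p : G.Walk i j, p.IsPath ∧ p.length = G.dist i j :=
  unique_shortest_path_of_blockGraph_general G hG i j hij
end

section
/- Let G be a block graph and suppose vertex z lies on the unique shortest path between vertices x and y with z≠x,y. Then every path in G from x to y passes through z. -/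
/-!
Induct on the clique-sum decomposition of a component `S`, proving that every interior vertex of
a shortest walk inside `S` lies on every path inside `S` with the same ends. In a clique a shortest
walk has no interior vertex. In a sum of `T` and `T'` glued at `c`, a path inside `T ∪ T'` whose
ends lie in `T` stays in `T`, because leaving `T` would make it pass `c` twice; a path from `T` to
`T' \ T` passes `c`, and cutting both walks at `c` reduces the claim to the two pieces, since
subwalks of shortest walks are shortest.
-/

namespace SimpleGraph

variable {V : Type*} {G : SimpleGraph V}

namespace Walk

lemma IsPath.eq_of_mem_takeUntil_of_mem_dropUntil [DecidableEq V] {u v w c : V}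
    {q : G.Walk u v} (hq : q.IsPath) (hw : w ∈ q.support)
    (h₁ : c ∈ (q.takeUntil w hw).support) (h₂ : c ∈ (q.dropUntil w hw).support) : c = w := by
  rw [← cons_tail_support, List.mem_cons] at h₂
  refine h₂.resolve_right fun h₂ => ?_
  have hnd := hq.support_nodup
  rw [← q.take_spec hw, support_append, List.nodup_append] at hnd
  exact hnd.2.2 c h₁ c h₂ rfl

lemma eq_or_eq_of_mem_support_of_length_le_one {u v w : V} {p : G.Walk u v}
    (hp : p.length ≤ 1) (hw : w ∈ p.support) : w = u ∨ w = v := by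
  cases p with
  | nil => simp_all
  | cons _ q =>
    cases q with
    | nil => simpa using hw
    | cons _ _ => simp at hp

end Walk

def SeparatesWithin (G : SimpleGraph V) (S T : Set V) (c : V) : Prop :=
  ∀ a ∈ T, ∀ b ∈ S \ T, ∀ w : G.Walk a b, (∀ v ∈ w.support, v ∈ S) → c ∈ w.support

lemma separatesWithin_union_singleton {S A B : Set V} {c : V} (hS : S \ (A ∪ {c}) ⊆ B)
    (hsep : ∀ a ∈ A, ∀ b ∈ B, ∀ w : G.Walk a b, (∀ v ∈ w.support, v ∈ S) → c ∈ w.support) :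
    G.SeparatesWithin S (A ∪ {c}) c := by
  rintro a (ha | rfl) b hb w hwS
  · exact hsep a ha b (hS hb) w hwS
  · exact w.start_mem_support

lemma SeparatesWithin.support_subset [DecidableEq V] {S T : Set V} {c : V}
    (hsep : G.SeparatesWithin S T c) (hc : c ∈ T) {x y : V} {q : G.Walk x y} (hq : q.IsPath)
    (hqS : ∀ v ∈ q.support, v ∈ S) (hx : x ∈ T) (hy : y ∈ T) : ∀ v ∈ q.support, v ∈ T := by
  intro v hv
  by_contra hvT
  have hc₁ : c ∈ (q.takeUntil v hv).support :=
    hsep x hx v ⟨hqS v hv, hvT⟩ _ fun u hu => hqS u (q.support_takeUntil_subset_support hv hu)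
  have hc₂ : c ∈ (q.dropUntil v hv).support := by
    simpa using hsep y hy v ⟨hqS v hv, hvT⟩ (q.dropUntil v hv).reverse fun u hu =>
      hqS u (q.support_dropUntil_subset_support hv (by simpa using hu))
  exact hvT (hq.eq_of_mem_takeUntil_of_mem_dropUntil hv hc₁ hc₂ ▸ hc)

def ShortestWalkInteriorsSeparate (G : SimpleGraph V) (S : Set V) : Prop :=
  ∀ ⦃x y z : V⦄ (p w : G.Walk x y), p.length = G.dist x y → w.IsPath →
    (∀ v ∈ p.support, v ∈ S) → (∀ v ∈ w.support, v ∈ S) →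
    z ∈ p.support → z ≠ x → z ≠ y → z ∈ w.support

lemma shortestWalkInteriorsSeparate_of_isClique {S : Set V} (hS : G.IsClique S) :
    G.ShortestWalkInteriorsSeparate S := by
  intro x y z p _ hp _ hpS _ hz hzx hzy
  have hlen : p.length ≤ 1 := by
    rw [hp]
    by_cases hxy : x = y
    · simp [hxy]
    · exact (dist_eq_one_iff_adj.mpr (hS (hpS x p.start_mem_support)
        (hpS y p.end_mem_support) hxy)).le
  exact (Walk.eq_or_eq_of_mem_support_of_length_le_one hlen hz).elim (absurd · hzx) (absurd · hzy)

namespace ShortestWalkInteriorsSeparate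

variable [DecidableEq V] {T T' : Set V} {c : V}

lemma mem_support_of_split (hT : G.ShortestWalkInteriorsSeparate T)
    (hT' : G.ShortestWalkInteriorsSeparate T') {x y z : V} {p w : G.Walk x y}
    (hp : p.length = G.dist x y) (hw : w.IsPath) (hcp : c ∈ p.support) (hcw : c ∈ w.support)
    (hp₁ : ∀ v ∈ (p.takeUntil c hcp).support, v ∈ T)
    (hw₁ : ∀ v ∈ (w.takeUntil c hcw).support, v ∈ T)
    (hp₂ : ∀ v ∈ (p.dropUntil c hcp).support, v ∈ T')
    (hw₂ : ∀ v ∈ (w.dropUntil c hcw).support, v ∈ T')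
    (hz : z ∈ p.support) (hzx : z ≠ x) (hzy : z ≠ y) : z ∈ w.support := by
  by_cases hzc : z = c
  · exact hzc ▸ hcw
  rw [← p.take_spec hcp, Walk.mem_support_append_iff] at hz
  rcases hz with hz | hz
  · exact w.support_takeUntil_subset_support hcw <| hT _ _
      (length_eq_dist_of_subwalk hp (p.isSubwalk_takeUntil hcp)) (hw.takeUntil hcw)
      hp₁ hw₁ hz hzx hzc
  · exact w.support_dropUntil_subset_support hcw <| hT' _ _
      (length_eq_dist_of_subwalk hp (p.isSubwalk_dropUntil hcp)) (hw.dropUntil hcw)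
      hp₂ hw₂ hz hzc hzy

lemma mem_support_of_crossing {S : Set V} (hT : G.ShortestWalkInteriorsSeparate T)
    (hT' : G.ShortestWalkInteriorsSeparate T') (hcT : c ∈ T) (hcT' : c ∈ T')
    (hsep : G.SeparatesWithin S T c) (hsep' : G.SeparatesWithin S T' c) {x y z : V}
    (hx : x ∈ T) (hy : y ∈ S \ T) (hy' : y ∈ T') {p w : G.Walk x y}
    (hp : p.length = G.dist x y) (hw : w.IsPath)
    (hpS : ∀ v ∈ p.support, v ∈ S) (hwS : ∀ v ∈ w.support, v ∈ S)
    (hz : z ∈ p.support) (hzx : z ≠ x) (hzy : z ≠ y) : z ∈ w.support := by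
  have hpath := p.isPath_of_length_eq_dist hp
  have hcp := hsep x hx y hy p hpS
  have hcw := hsep x hx y hy w hwS
  refine hT.mem_support_of_split hT' hp hw hcp hcw ?_ ?_ ?_ ?_ hz hzx hzy
  · exact hsep.support_subset hcT (hpath.takeUntil hcp)
      (fun v hv => hpS v (p.support_takeUntil_subset_support hcp hv)) hx hcT
  · exact hsep.support_subset hcT (hw.takeUntil hcw)
      (fun v hv => hwS v (w.support_takeUntil_subset_support hcw hv)) hx hcT
  · exact hsep'.support_subset hcT' (hpath.dropUntil hcp)
      (fun v hv => hpS v (p.support_dropUntil_subset_support hcp hv)) hcT' hy'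
  · exact hsep'.support_subset hcT' (hw.dropUntil hcw)
      (fun v hv => hwS v (w.support_dropUntil_subset_support hcw hv)) hcT' hy'

lemma union (hT : G.ShortestWalkInteriorsSeparate T) (hT' : G.ShortestWalkInteriorsSeparate T')
    (hcT : c ∈ T) (hcT' : c ∈ T') (hsep : G.SeparatesWithin (T ∪ T') T c)
    (hsep' : G.SeparatesWithin (T ∪ T') T' c) : G.ShortestWalkInteriorsSeparate (T ∪ T') := by
  intro x y z p w hp hw hpS hwS hz hzx hzy
  have hpath := p.isPath_of_length_eq_dist hp
  have hxS := hpS x p.start_mem_support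
  have hyS := hpS y p.end_mem_support
  by_cases hxT : x ∈ T
  · by_cases hyT : y ∈ T
    · exact hT p w hp hw (hsep.support_subset hcT hpath hpS hxT hyT)
        (hsep.support_subset hcT hw hwS hxT hyT) hz hzx hzy
    · exact hT.mem_support_of_crossing hT' hcT hcT' hsep hsep' hxT ⟨hyS, hyT⟩
        (hyS.resolve_left hyT) hp hw hpS hwS hz hzx hzy
  · have hxT' := hxS.resolve_left hxT
    by_cases hyT' : y ∈ T'
    · exact hT' p w hp hw (hsep'.support_subset hcT' hpath hpS hxT' hyT')
        (hsep'.support_subset hcT' hw hwS hxT' hyT') hz hzx hzy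
    · exact hT'.mem_support_of_crossing hT hcT' hcT hsep' hsep hxT' ⟨hyS, hyT'⟩
        (hyS.resolve_right hyT') hp hw hpS hwS hz hzx hzy

end ShortestWalkInteriorsSeparate

theorem IsCliqueSumOfCompletes.shortestWalkInteriorsSeparate {S : Set V}
    (hS : G.IsCliqueSumOfCompletes S) : G.ShortestWalkInteriorsSeparate S := by
  classical
  induction hS with
  | complete S hS => exact shortestWalkInteriorsSeparate_of_isClique hS
  | sum A B c _ _ _ _ _ hsep _ _ ihA ihB =>
    have hS : A ∪ B ∪ {c} = (A ∪ {c}) ∪ (B ∪ {c}) := by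
      ext; simp only [Set.mem_union, Set.mem_singleton_iff]; tauto
    rw [hS] at hsep ⊢
    have hdiffA : ((A ∪ {c}) ∪ (B ∪ {c})) \ (A ∪ {c}) ⊆ B := fun v => by
      simp only [Set.mem_sdiff, Set.mem_union, Set.mem_singleton_iff]; tauto
    have hdiffB : ((A ∪ {c}) ∪ (B ∪ {c})) \ (B ∪ {c}) ⊆ A := fun v => by
      simp only [Set.mem_sdiff, Set.mem_union, Set.mem_singleton_iff]; tauto
    refine ihA.union ihB (.inr rfl) (.inr rfl) ?_ ?_
    · exact separatesWithin_union_singleton hdiffA hsep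
    · refine separatesWithin_union_singleton hdiffB fun a ha b hb w hwS => ?_
      simpa using hsep b hb a ha w.reverse (by simpa using hwS)

end SimpleGraph

theorem every_walk_through_interior_vertex_general {V : Type*} (G : SimpleGraph V)
    (hG : G.IsBlockGraph) (x y z : V)
    (p : G.Walk x y) (hp : p.IsPath ∧ p.length = G.dist x y)
    (hz : z ∈ p.support) (hzx : z ≠ x) (hzy : z ≠ y) :
    ∀ w : G.Walk x y, z ∈ w.support := by
  classical
  intro w
  have hreach : ∀ {u} (q : G.Walk x u), ∀ v ∈ q.support, v ∈ {v | G.Reachable x v} :=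
    fun q v hv => (q.takeUntil v hv).reachable
  exact w.support_bypass_subset_support <| (hG x).shortestWalkInteriorsSeparate p w.bypass hp.2
    w.bypass_isPath (hreach p) (hreach _) hz hzx hzy

/-- If `z` is an interior vertex of the unique shortest path between `x` and `y` in a
block graph, then every walk from `x` to `y` passes through `z`. -/
theorem every_walk_through_interior_vertex {V : Type*} [Fintype V] (G : SimpleGraph V)
    (hG : G.IsBlockGraph) (x y z : V)
    (p : G.Walk x y) (hp : p.IsPath ∧ p.length = G.dist x y)
    (hz : z ∈ p.support) (hzx : z ≠ x) (hzy : z ≠ y) :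
    ∀ w : G.Walk x y, z ∈ w.support :=
  every_walk_through_interior_vertex_general G hG x y z p hp hz hzx hzy
end

section
/- Let K be an invertible symmetric n×n matrix over a field, and let G be the graph on [n] with an edge (i,j) for each nonzero off-diagonal entry K_{ij}, all vertices having loops. If (A,B,{c}) is a partition of [n] such that every path in G from A to B passes through c, then the submatrix of K^{-1} with rows A∪{c} and columns B∪{c} has rank at most 1. -/
/-!
Since `c` separates `A` from `B`, the rows of `K` indexed by `A` are supported on `A ∪ {c}`, so
`K[A, A ∪ {c}] * K⁻¹[A ∪ {c}, B ∪ {c}] = (K * K⁻¹)[A, B ∪ {c}] = 0`. The left factor has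
independent rows (they are rows of an invertible matrix with only zeros removed), so by
Sylvester's rank inequality the right factor has rank at most `|A ∪ {c}| - |A| = 1`.
-/

namespace Matrix

theorem submatrix_mul_submatrix_eq_of_support {α k l m n o : Type*}
    [NonUnitalNonAssocSemiring α] [Fintype m] {K : Matrix l m α} (N : Matrix m n α)
    (r : k → l) (f : o → n) {S : Finset m} (hsupp : ∀ i, ∀ j ∉ S, K (r i) j = 0) :
    K.submatrix r ((↑) : S → m) * N.submatrix (↑) f = (K * N).submatrix r f := by
  ext i t
  calc ∑ s : S, K (r i) s * N s (f t) = ∑ j ∈ S, K (r i) j * N j (f t) :=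
        Finset.sum_coe_sort S (fun j => K (r i) j * N j (f t))
    _ = ∑ j, K (r i) j * N j (f t) :=
        Finset.sum_subset (Finset.subset_univ _) fun j _ hj => by rw [hsupp i j hj, zero_mul]

variable {F m : Type*} [Field F] [Fintype m] [DecidableEq m]

theorem rank_submatrix_eq_card_of_support {K : Matrix m m F} (hK : IsUnit K.det)
    {R S : Finset m} (hsupp : ∀ i ∈ R, ∀ j ∉ S, K i j = 0) :
    (K.submatrix ((↑) : R → m) ((↑) : S → m)).rank = R.card := by
  refine le_antisymm ((rank_le_card_height _).trans_eq (Fintype.card_coe R)) ?_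
  have hrows : (K.submatrix ((↑) : R → m) id).rank = R.card := by
    rw [LinearIndependent.rank_matrix, Fintype.card_coe]
    exact (linearIndependent_rows_of_isUnit ((isUnit_iff_isUnit_det K).2 hK)).comp _
      Subtype.val_injective
  have hfactor := submatrix_mul_submatrix_eq_of_support (1 : Matrix m m F) ((↑) : R → m) id
    fun i j hj => hsupp i i.2 j hj
  rw [mul_one] at hfactor
  rw [← hrows, ← hfactor]
  exact rank_mul_le_left _ _

theorem rank_inv_submatrix_add_card_le {K : Matrix m m F} (hK : IsUnit K.det)
    {R S T : Finset m} (hsupp : ∀ i ∈ R, ∀ j ∉ S, K i j = 0) (hRT : Disjoint R T) :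
    (K⁻¹.submatrix ((↑) : S → m) ((↑) : T → m)).rank + R.card ≤ S.card := by
  have hmul : K.submatrix ((↑) : R → m) ((↑) : S → m) *
      K⁻¹.submatrix ((↑) : S → m) ((↑) : T → m) = 0 := by
    refine (submatrix_mul_submatrix_eq_of_support K⁻¹ ((↑) : R → m) ((↑) : T → m)
      fun i j hj => hsupp i i.2 j hj).trans ?_
    ext i t
    rw [submatrix_apply, mul_nonsing_inv K hK]
    exact one_apply_ne fun h => Finset.disjoint_left.mp hRT i.2 (h ▸ t.2)
  simpa [rank_submatrix_eq_card_of_support hK hsupp, add_comm] using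
    rank_add_rank_le_card_of_mul_eq_zero hmul

end Matrix

theorem SimpleGraph.mem_insert_of_adj_of_separates {V : Type*} [Fintype V] [DecidableEq V]
    {G : SimpleGraph V} {A B : Finset V} {c : V} (hcA : c ∉ A) (hcB : c ∉ B)
    (hcover : A ∪ B ∪ {c} = Finset.univ)
    (hsep : ∀ a ∈ A, ∀ b ∈ B, ∀ w : G.Walk a b, c ∈ w.support)
    {a v : V} (ha : a ∈ A) (hadj : G.Adj a v) : v ∈ insert c A := by
  by_contra hv
  have hvB : v ∈ B := by
    have hv' : v ∈ A ∪ B ∪ {c} := hcover ▸ Finset.mem_univ v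
    simp only [Finset.mem_union, Finset.mem_singleton, Finset.mem_insert] at hv hv'
    tauto
  have hc : c = a ∨ c = v := by simpa using hsep a ha v hvB hadj.toWalk
  rcases hc with rfl | rfl
  · exact hcA ha
  · exact hcB hvB

theorem rank_inv_submatrix_le_one_of_separator_general {F : Type*} [Field F] {n : ℕ}
    (K : Matrix (Fin n) (Fin n) F) (hinv : IsUnit K.det)
    (G : SimpleGraph (Fin n)) (hAdj : ∀ i j, G.Adj i j ↔ i ≠ j ∧ K i j ≠ 0)
    (A B : Finset (Fin n)) (c : Fin n)
    (hAB : Disjoint A B) (hcA : c ∉ A) (hcB : c ∉ B)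
    (hcover : A ∪ B ∪ {c} = Finset.univ)
    (hsep : ∀ a ∈ A, ∀ b ∈ B, ∀ w : G.Walk a b, c ∈ w.support) :
    Matrix.rank ((K⁻¹).submatrix
      (fun a : ↥(insert c A) => (a : Fin n))
      (fun b : ↥(insert c B) => (b : Fin n))) ≤ 1 := by
  have hsupp : ∀ a ∈ A, ∀ j ∉ insert c A, K a j = 0 := fun a ha j hj =>
    not_not.1 fun hKaj => hj <| G.mem_insert_of_adj_of_separates hcA hcB hcover hsep ha <|
      (hAdj a j).2 ⟨fun h => hj (h ▸ Finset.mem_insert_of_mem ha), hKaj⟩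
  have hrank := Matrix.rank_inv_submatrix_add_card_le hinv hsupp
    (Finset.disjoint_insert_right.2 ⟨hcA, hAB⟩)
  rw [Finset.card_insert_of_notMem hcA, add_comm A.card] at hrank
  exact Nat.le_of_add_le_add_right hrank

/-- If `K` is an invertible symmetric matrix whose support graph `G` is separated by the
single vertex `c` into pieces `A` and `B`, then the submatrix of `K⁻¹` with rows
`A ∪ {c}` and columns `B ∪ {c}` has rank at most `1`. -/
theorem rank_inv_submatrix_le_one_of_separator {F : Type*} [Field F] {n : ℕ}
    (K : Matrix (Fin n) (Fin n) F) (hsym : K.IsSymm) (hinv : IsUnit K.det)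
    (G : SimpleGraph (Fin n)) (hAdj : ∀ i j, G.Adj i j ↔ i ≠ j ∧ K i j ≠ 0)
    (A B : Finset (Fin n)) (c : Fin n)
    (hAB : Disjoint A B) (hcA : c ∉ A) (hcB : c ∉ B)
    (hcover : A ∪ B ∪ {c} = Finset.univ)
    (hsep : ∀ a ∈ A, ∀ b ∈ B, ∀ w : G.Walk a b, c ∈ w.support) :
    Matrix.rank ((K⁻¹).submatrix
      (fun a : ↥(insert c A) => (a : Fin n))
      (fun b : ↥(insert c B) => (b : Fin n))) ≤ 1 :=
  rank_inv_submatrix_le_one_of_separator_general K hinv G hAdj A B c hAB hcA hcB hcover hsep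
end

section
/- Let Σ be the covariance matrix of an n-dimensional multivariate normal distribution (positive definite, real symmetric), with K=Σ^{-1}. Then for any x,y, det(K)·Σ_{xy} equals the sum over all simple paths P=(p_1,…,p_m) from x to y in the graph determined by the nonzero entries of K of (-1)^{m+1} K_{p_1p_2}K_{p_2p_3}···K_{p_{m-1}p_m}·det(K_{\P}), where K_{\P} is K with the rows and columns indexed by the vertices of P deleted (det of an empty matrix is 1). -/
/-!
Over any commutative ring the adjugate satisfies two cofactor identities:
`adj K x x = det K₋ₓ` and, for `y ≠ x`, `adj K x y = -∑_{j ≠ x} K x j · adj K₋ₓ j y`, where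
`K₋ₓ` deletes row and column `x`. Unfolding the second identity recursively peels off the first
edge `x → j` of a path and deletes its start vertex; at `y` the first identity leaves the minor
of `K` on the unvisited vertices. Only steps with `K x j ≠ 0` contribute, so the sum runs over
the simple paths of the support graph. For positive definite `K`, `det K · K⁻¹ = adj K`.
-/

open Matrix SimpleGraph

variable {ι R : Type*} [CommRing R]

theorem Matrix.det_submatrix_eq_of_range_eq {α β : Type*} [Fintype α] [DecidableEq α]
    [Fintype β] [DecidableEq β] (M : Matrix ι ι R) {f : α → ι} {g : β → ι}
    (hf : f.Injective) (hg : g.Injective) (h : Set.range f = Set.range g) :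
    (M.submatrix f f).det = (M.submatrix g g).det := by
  let e : α ≃ β :=
    ((Equiv.ofInjective f hf).trans (Equiv.setCongr h)).trans (Equiv.ofInjective g hg).symm
  have hge : g ∘ e = f := funext fun a => by simp [e, Equiv.apply_ofInjective_symm]
  rw [← hge, ← submatrix_submatrix, det_submatrix_equiv_self]

namespace SimpleGraph.Path

variable {G : SimpleGraph ι}

def consInduce {x : ι} (y : ({x}ᶜ : Set ι))
    (jq : Σ j : {j : ({x}ᶜ : Set ι) // G.Adj x j}, (G.induce {x}ᶜ).Path j y) : G.Path x y :=
  ⟨.cons jq.1.2 (jq.2.1.map (Embedding.induce _).toHom), by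
    refine (jq.2.2.map (f := (Embedding.induce _).toHom) Subtype.val_injective).cons ?_
    rw [Walk.support_map, List.mem_map]
    rintro ⟨a, -, hax⟩
    exact a.2 hax⟩

theorem consInduce_bijective {x : ι} (y : ({x}ᶜ : Set ι)) :
    Function.Bijective (consInduce (G := G) y) := by
  constructor
  · rintro ⟨⟨j₁, h₁⟩, q₁, hq₁⟩ ⟨⟨j₂, h₂⟩, q₂, hq₂⟩ h
    obtain ⟨hj, hq⟩ := Walk.cons.inj (congrArg Subtype.val h)
    obtain rfl : j₁ = j₂ := Subtype.ext hj
    obtain rfl : q₁ = q₂ :=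
      Walk.map_injective_of_injective Subtype.val_injective _ _ (eq_of_heq hq)
    rfl
  · obtain ⟨y, hy⟩ := y
    dsimp only [Function.Surjective]
    rintro ⟨_ | ⟨h, w⟩, hp⟩
    · exact absurd rfl hy
    obtain ⟨hw, hxw⟩ := Walk.cons_isPath_iff h w |>.1 hp
    have hws : ∀ v ∈ w.support, v ∈ ({x}ᶜ : Set ι) := fun v hv hvx => hxw (hvx ▸ hv)
    refine ⟨⟨⟨⟨_, hws _ w.start_mem_support⟩, h⟩, w.induce _ hws, ?_⟩, ?_⟩
    · exact Walk.IsPath.of_map (f := (Embedding.induce _).toHom) (by rwa [Walk.map_induce])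
    · exact Subtype.ext (congrArg (Walk.cons h) (Walk.map_induce w hws))

end SimpleGraph.Path

variable [Fintype ι] [DecidableEq ι]

theorem Fintype.sum_eq_add_sum_compl_singleton {M : Type*} [AddCommMonoid M] (f : ι → M)
    (x : ι) : ∑ j, f j = f x + ∑ j : ({x}ᶜ : Set ι), f j := by
  rw [Fintype.sum_eq_add_sum_compl x,
    Finset.sum_subtype _ (p := (· ∈ ({x}ᶜ : Set ι))) fun j => by simp]

namespace Matrix

theorem det_updateRow_single_self (M : Matrix ι ι R) (x : ι) :
    (M.updateRow x (Pi.single x 1)).det =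
      (M.submatrix ((↑) : ({x}ᶜ : Set ι) → ι) (↑)).det := by
  rw [← det_submatrix_equiv_self (Equiv.Set.sumCompl {x})]
  set N := (M.updateRow x (Pi.single x 1)).submatrix (Equiv.Set.sumCompl {x})
    (Equiv.Set.sumCompl {x})
  have h₁₂ : N.toBlocks₁₂ = 0 := by
    ext ⟨i, rfl⟩ ⟨j, hj⟩
    simp [N, toBlocks₁₂, Ne.symm hj]
  have h₂₂ : N.toBlocks₂₂ = M.submatrix (↑) (↑) := by
    ext ⟨i, hi⟩ ⟨j, _⟩
    exact congrFun (updateRow_ne hi) _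
  rw [← fromBlocks_toBlocks N, h₁₂, h₂₂, det_fromBlocks_zero₁₂, det_unique]
  simp [N, toBlocks₁₁]

theorem adjugate_apply_self (M : Matrix ι ι R) (x : ι) :
    M.adjugate x x = (M.submatrix ((↑) : ({x}ᶜ : Set ι) → ι) (↑)).det := by
  rw [adjugate_apply, det_updateRow_single_self]

theorem adjugate_submatrix_compl_singleton_apply (M : Matrix ι ι R) (x : ι)
    (j y : ({x}ᶜ : Set ι)) :
    (M.submatrix ((↑) : ({x}ᶜ : Set ι) → ι) (↑)).adjugate j y =
      ((M.updateRow y (Pi.single j 1)).updateRow x (Pi.single x 1)).det := by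
  rw [adjugate_apply, det_updateRow_single_self]
  congr 1
  ext i k
  by_cases hi : i = y
  · subst hi
    simp [Pi.single_apply, Subtype.ext_iff]
  · simp [updateRow_ne hi, updateRow_ne (Subtype.coe_ne_coe.2 hi)]

theorem adjugate_apply_eq_neg_sum_mul_adjugate_submatrix (M : Matrix ι ι R) (x : ι)
    (y : ({x}ᶜ : Set ι)) :
    M.adjugate x y =
      -∑ j : ({x}ᶜ : Set ι),
        M x j * (M.submatrix ((↑) : ({x}ᶜ : Set ι) → ι) (↑)).adjugate j y := by
  -- Expand `adj M x y = det (M with row y replaced by eₓ)` along row `x`: the `j = x` cofactor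
  -- has two rows equal to `eₓ`, and for `j ≠ x` swapping rows `x` and `y` turns the cofactor
  -- into `-adj M₋ₓ j y`.
  obtain ⟨y, hyx : y ≠ x⟩ := y
  have hx : (M.updateRow y (Pi.single x 1)).adjugate x x = 0 := by
    rw [adjugate_apply]
    exact det_zero_of_row_eq hyx (by simp [updateRow_ne hyx])
  have hj : ∀ j : ({x}ᶜ : Set ι), (M.updateRow y (Pi.single x 1)).adjugate j x =
      -(M.submatrix ((↑) : ({x}ᶜ : Set ι) → ι) (↑)).adjugate j ⟨y, hyx⟩ := by
    intro j
    have hswap : (M.updateRow y (Pi.single x 1)).updateRow x (Pi.single j 1) =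
        ((M.updateRow y (Pi.single j 1)).updateRow x (Pi.single x 1)).submatrix
          (Equiv.swap x y) id := by
      ext i k
      rcases eq_or_ne i x with rfl | hix
      · simp [hyx]
      rcases eq_or_ne i y with rfl | hiy
      · simp [hix]
      · simp [hix, hiy, Equiv.swap_apply_of_ne_of_ne hix hiy]
    rw [adjugate_apply, hswap, det_permute, Equiv.Perm.sign_swap hyx.symm,
      adjugate_submatrix_compl_singleton_apply]
    simp
  rw [adjugate_apply, det_eq_sum_mul_adjugate_row _ x, Fintype.sum_eq_add_sum_compl_singleton,
    hx, mul_zero, zero_add, ← Finset.sum_neg_distrib]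
  refine Finset.sum_congr rfl fun j _ => ?_
  rw [hj, updateRow_ne hyx.symm, mul_neg]

theorem det_mul_inv_apply (A : Matrix ι ι R) (h : IsUnit A.det) (i j : ι) :
    A.det * A⁻¹ i j = A.adjugate i j := by
  rw [inv_def, smul_apply, smul_eq_mul, ← mul_assoc, Ring.mul_inverse_cancel _ h, one_mul]

end Matrix

namespace SimpleGraph.Walk

variable {G : SimpleGraph ι}

/-- The term of `p = (p₁, …, pₘ)` in the path expansion; `(-1) ^ p.length` is `(-1)^(m+1)`. -/
def pathWeight (K : Matrix ι ι R) {x y : ι} (p : G.Walk x y) : R :=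
  (-1) ^ p.length * (p.darts.map fun d => K d.fst d.snd).prod *
    (K.submatrix (Subtype.val : {i : ι // i ∉ p.support} → ι) Subtype.val).det

theorem pathWeight_nil (K : Matrix ι ι R) (x : ι) :
    pathWeight K (nil : G.Walk x x) = (K.submatrix ((↑) : ({x}ᶜ : Set ι) → ι) (↑)).det := by
  rw [pathWeight, length_nil, darts_nil, pow_zero, List.map_nil, List.prod_nil, one_mul, one_mul]
  refine det_submatrix_eq_of_range_eq K
    (f := (Subtype.val : {i : ι // i ∉ (nil : G.Walk x x).support} → ι))
    (g := ((↑) : ({x}ᶜ : Set ι) → ι)) Subtype.val_injective Subtype.val_injective ?_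
  ext i
  simp

theorem pathWeight_cons_map_induce (K : Matrix ι ι R) {x : ι} {j z : ({x}ᶜ : Set ι)}
    (hj : G.Adj x j) (q : (G.induce {x}ᶜ).Walk j z) :
    pathWeight K (cons hj (q.map (Embedding.induce _).toHom)) =
      -K x j * pathWeight (K.submatrix ((↑) : ({x}ᶜ : Set ι) → ι) (↑)) q := by
  set p := cons hj (q.map (Embedding.induce _).toHom)
  have hlen : p.length = q.length + 1 := congrArg (· + 1) (length_map _ q)
  have hsupp : p.support = x :: q.support.map (↑) := congrArg (x :: ·) (support_map _ q)
  have hprod : (p.darts.map fun d => K d.fst d.snd).prod =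
      K x j *
        (q.darts.map fun d => K.submatrix ((↑) : ({x}ᶜ : Set ι) → ι) (↑) d.fst d.snd).prod := by
    have hdarts : p.darts = ⟨(x, j), hj⟩ :: (q.map (Embedding.induce _).toHom).darts := rfl
    rw [hdarts, List.map_cons, List.prod_cons, darts_map, List.map_map]
    rfl
  rw [pathWeight, pathWeight, hlen, hprod, pow_succ,
    show ∀ a b c d : R, a * -1 * (b * c) * d = -b * (a * c * d) from fun a b c d => by ring]
  congr 2
  rw [submatrix_submatrix]
  -- the two sides decide `· ∈ q.support` through different `BEq` instances on `{x}ᶜ`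
  convert det_submatrix_eq_of_range_eq K Subtype.val_injective
    (Subtype.val_injective.comp Subtype.val_injective) ?_
  ext i
  simp only [hsupp, Subtype.range_coe_subtype, Set.mem_compl_iff, Set.mem_singleton_iff,
    List.map_subtype, List.map_id_fun', id_eq, List.mem_cons, List.mem_unattach, not_or,
    not_exists, Set.mem_ofPred_eq, Set.mem_range, Function.comp_apply, Subtype.exists, exists_prop,
    exists_and_right, exists_eq_right]
  exact ⟨fun ⟨hix, hq⟩ => ⟨hix, hq hix⟩, fun ⟨hix, hq⟩ => ⟨hix, fun _ => hq⟩⟩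

end SimpleGraph.Walk

theorem SimpleGraph.Path.sum_eq_sum_sum_consInduce {M : Type*} [AddCommMonoid M]
    {G : SimpleGraph ι} [DecidableRel G.Adj] {x : ι} (y : ({x}ᶜ : Set ι))
    (f : G.Path x y → M) :
    ∑ p, f p = ∑ j : {j : ({x}ᶜ : Set ι) // G.Adj x j},
      ∑ q : (G.induce {x}ᶜ).Path j y, f (consInduce y ⟨j, q⟩) := by
  rw [← (consInduce_bijective y).sum_comp, Fintype.sum_sigma]

theorem Matrix.adjugate_apply_eq_sum_pathWeight (K : Matrix ι ι R) (G : SimpleGraph ι)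
    [DecidableRel G.Adj] (hK : ∀ i j, i ≠ j → ¬ G.Adj i j → K i j = 0) (x y : ι) :
    K.adjugate x y = ∑ p : G.Path x y, p.1.pathWeight K := by
  induction hn : Fintype.card ι generalizing ι with
  | zero => exact (Fintype.card_eq_zero_iff.1 hn).elim x
  | succ n ih =>
    rcases eq_or_ne y x with rfl | hyx
    · rw [adjugate_apply_self, Fintype.sum_eq_single Path.nil fun p hp => absurd p.loop_eq hp]
      exact (Walk.pathWeight_nil K y).symm
    lift y to ({x}ᶜ : Set ι) using hyx
    have hcard : Fintype.card ({x}ᶜ : Set ι) = n := by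
      rw [Fintype.card_compl_set, hn, Fintype.card_unique, Nat.add_sub_cancel]
    set A := K.submatrix (Subtype.val : ({x}ᶜ : Set ι) → ι) Subtype.val
    have hpaths : ∀ j : {j : ({x}ᶜ : Set ι) // G.Adj x j},
        ∑ q : (G.induce {x}ᶜ).Path j y, (Path.consInduce y ⟨j, q⟩).1.pathWeight K =
          -(K x j * A.adjugate j y) := by
      intro j
      have hA : ∀ i j, i ≠ j → ¬ (G.induce {x}ᶜ).Adj i j → A i j = 0 :=
        fun i j hij hG => hK i j (Subtype.coe_ne_coe.2 hij) hG
      rw [ih A (G.induce {x}ᶜ) hA j y hcard, Finset.mul_sum, ← Finset.sum_neg_distrib]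
      exact Finset.sum_congr rfl fun q _ =>
        (Walk.pathWeight_cons_map_induce K j.2 q.1).trans (neg_mul _ _)
    have hneighbours : ∑ j : {j : ({x}ᶜ : Set ι) // G.Adj x j}, K x j * A.adjugate j y =
        ∑ j : ({x}ᶜ : Set ι), K x j * A.adjugate j y := by
      have h := Fintype.sum_subtype_add_sum_subtype (fun j : ({x}ᶜ : Set ι) => G.Adj x j)
        (fun j => K x j * A.adjugate j y)
      rwa [Fintype.sum_eq_zero
        (fun j : {j : ({x}ᶜ : Set ι) // ¬ G.Adj x j} => K x j * A.adjugate j y)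
        (fun j => by rw [hK x j (fun h => j.1.2 h.symm) j.2, zero_mul]), add_zero] at h
    rw [adjugate_apply_eq_neg_sum_mul_adjugate_submatrix, Path.sum_eq_sum_sum_consInduce,
      Fintype.sum_congr _ _ hpaths, Finset.sum_neg_distrib, hneighbours]

open Finset in
theorem det_mul_inv_entry_eq_sum_over_paths_general {n : ℕ}
    (K : Matrix (Fin n) (Fin n) ℝ) (hK : K.PosDef)
    (G : SimpleGraph (Fin n)) [DecidableRel G.Adj]
    (hAdj : ∀ i j, G.Adj i j ↔ i ≠ j ∧ K i j ≠ 0)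
    (x y : Fin n) :
    K.det * (K⁻¹ x y) =
      ∑ p : G.Path x y,
        (-1 : ℝ) ^ (p.1.length) *
          ((p.1.darts.map fun d => K d.fst d.snd).prod) *
          (K.submatrix (fun i : {i : Fin n // i ∉ p.1.support} => (i : Fin n))
            (fun i : {i : Fin n // i ∉ p.1.support} => (i : Fin n))).det := by
  have hsupp : ∀ i j, i ≠ j → ¬ G.Adj i j → K i j = 0 := fun i j hij hG =>
    not_not.1 fun hne => hG ((hAdj i j).2 ⟨hij, hne⟩)
  rw [K.det_mul_inv_apply ((isUnit_iff_isUnit_det K).1 hK.isUnit),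
    K.adjugate_apply_eq_sum_pathWeight G hsupp]
  rfl

open Finset in
/-- The path-sum expansion of the entries of the covariance matrix `Σ = K⁻¹` of a
multivariate normal distribution: `det K · Σ x y` is the sum over all simple paths `P`
from `x` to `y` in the support graph of `K` of
`(-1)^(m+1) · K_{p₁p₂} ⋯ K_{p_{m-1}p_m} · det (K with rows/columns of P removed)`,
where `m` is the number of vertices of `P` (so `(-1)^(m+1) = (-1)^length P`). -/
theorem det_mul_inv_entry_eq_sum_over_paths {n : ℕ}
    (K : Matrix (Fin n) (Fin n) ℝ) (hK : K.PosDef) (hsym : K.IsSymm)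
    (G : SimpleGraph (Fin n)) [DecidableRel G.Adj]
    (hAdj : ∀ i j, G.Adj i j ↔ i ≠ j ∧ K i j ≠ 0)
    (x y : Fin n) :
    K.det * (K⁻¹ x y) =
      ∑ p : G.Path x y,
        (-1 : ℝ) ^ (p.1.length) *
          ((p.1.darts.map fun d => K d.fst d.snd).prod) *
          (K.submatrix (fun i : {i : Fin n // i ∉ p.1.support} => (i : Fin n))
            (fun i : {i : Fin n // i ∉ p.1.support} => (i : Fin n))).det :=
  det_mul_inv_entry_eq_sum_over_paths_general K hK G hAdj x y
end

section
/- Let G=([n],E) be a block graph with all self loops, and K a symmetric matrix of indeterminates with K_{ij}=0 for (i,j)∉E. Let f_{xy} = det(K) times the (x,y) entry of K^{-1} (a polynomial in the entries of K). Then f_{xy} contains the monomial (-1)^{ℓ(x,y)} ∏_{(x',y')∈x↔y} k_{x'y'} ∏_{t∉x↔y} k_{tt} as one of its terms, where x↔y is the unique shortest path from x to y and ℓ(x,y) its length; moreover this monomial has strictly more diagonal factors k_{tt} than every other monomial of f_{xy}. -/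
open MvPolynomial

/-- The exponent vector of the shortest path monomial
`∏_{(x',y') ∈ p} k_{x'y'} ∏_{t ∉ p} k_{tt}` associated to a path `p`. -/
noncomputable def spExp {n : ℕ} {G : SimpleGraph (Fin n)} {x y : Fin n} (p : G.Walk x y) :
    Sym2 (Fin n) →₀ ℕ :=
  (p.darts.map fun d => Finsupp.single s(d.fst, d.snd) 1).sum +
    ∑ t ∈ Finset.univ.filter (fun t => t ∉ p.support), Finsupp.single s(t, t) 1

/-!
Expanding `adjugate K x y = det (K.updateRow y (Pi.single x 1))` by the Leibniz formula, the
nonzero terms come from permutations `σ` with `σ x = y` and `σ j ∈ {j} ∪ N(j)` for `j ≠ x`; the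
term of `σ` is `sign σ · ∏_{j ≠ x} k_{σ j, j}`, whose number of diagonal factors is the number of
fixed points of `σ` other than `x`. The orbit of `y` under `σ` up to `x` is a path from `y` to `x`
in `G` none of whose vertices but `x` is fixed, so there are at most `n - (ℓ(x,y) + 1)` such fixed
points, with equality only if this orbit is a geodesic and `σ` fixes everything off it. In a block
graph geodesics are unique (by induction on the clique-sum structure, splitting geodesics at the
gluing vertex), so equality forces `σ` to be the cycle along `x ↔ y`, whose term is the shortest
path monomial with sign `(-1)^ℓ(x,y)`.
-/

open Finset

namespace SimpleGraph

variable {V : Type*} {G : SimpleGraph V}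

def SeparatesIn (G : SimpleGraph V) (c : V) (A B : Set V) : Prop :=
  ∀ a ∈ A, ∀ b ∈ B, ∀ w : G.Walk a b, (∀ v ∈ w.support, v ∈ A ∪ B ∪ {c}) → c ∈ w.support

def HasUniqueGeodesicsIn (G : SimpleGraph V) (S : Set V) : Prop :=
  ∀ ⦃x y : V⦄ (p q : G.Walk x y), p.length = G.dist x y → q.length = G.dist x y →
    (∀ v ∈ p.support, v ∈ S) → (∀ v ∈ q.support, v ∈ S) → p = q

lemma Walk.eq_of_length_eq_one {x y : V} (p q : G.Walk x y) (hp : p.length = 1)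
    (hq : q.length = 1) : p = q := by
  cases p with
  | nil => simp at hp
  | cons _ p' =>
    cases q with
    | nil => simp at hq
    | cons _ q' =>
      cases p' with
      | cons => simp at hp
      | nil =>
        cases q' with
        | cons => simp at hq
        | nil => rfl

lemma Walk.IsPath.eq_of_mem_support_takeUntil_dropUntil [DecidableEq V]
    {a b u v : V} {r : G.Walk a b} (hr : r.IsPath) (hv : v ∈ r.support)
    (h₁ : u ∈ (r.takeUntil v hv).support) (h₂ : u ∈ (r.dropUntil v hv).support) : u = v := by
  have hnd := hr.support_nodup
  rw [← r.take_spec hv, Walk.support_append, List.nodup_append] at hnd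
  rw [← Walk.cons_tail_support, List.mem_cons] at h₂
  exact h₂.resolve_right fun h => hnd.2.2 u h₁ u h rfl

lemma IsClique.hasUniqueGeodesicsIn {S : Set V} (hS : G.IsClique S) :
    G.HasUniqueGeodesicsIn S := by
  intro x y p q hp hq hpS _
  by_cases hxy : x = y
  · subst hxy
    rw [dist_self] at hp hq
    rw [Walk.eq_nil_iff_nil.mpr (Walk.length_eq_zero_iff.mp hp),
      Walk.eq_nil_iff_nil.mpr (Walk.length_eq_zero_iff.mp hq)]
  · have hd : G.dist x y = 1 :=
      dist_eq_one_iff_adj.mpr (hS (hpS x p.start_mem_support) (hpS y p.end_mem_support) hxy)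
    exact Walk.eq_of_length_eq_one p q (hp.trans hd) (hq.trans hd)

namespace SeparatesIn

variable {A B : Set V} {c : V}

lemma symm (h : G.SeparatesIn c A B) : G.SeparatesIn c B A := fun b hb a ha w hw => by
  have hw' : ∀ v ∈ w.reverse.support, v ∈ A ∪ B ∪ {c} := fun v hv => by
    rw [Set.union_comm A B]
    exact hw v (by simpa using hv)
  simpa using h a ha b hb w.reverse hw'

lemma mem_support (h : G.SeparatesIn c A B) {a b : V} (ha : a ∈ A ∪ {c}) (hb : b ∈ B ∪ {c})
    (w : G.Walk a b) (hw : ∀ v ∈ w.support, v ∈ A ∪ B ∪ {c}) : c ∈ w.support := by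
  rcases ha with ha | rfl
  · rcases hb with hb | rfl
    · exact h a ha b hb w hw
    · exact w.end_mem_support
  · exact w.start_mem_support

variable [DecidableEq V]

lemma mem_of_isPath (h : G.SeparatesIn c A B) (hcB : c ∉ B) {a b : V} {r : G.Walk a b}
    (hr : r.IsPath) (hrS : ∀ v ∈ r.support, v ∈ A ∪ B ∪ {c}) (ha : a ∈ A ∪ {c})
    (hb : b ∈ A ∪ {c}) {v : V} (hv : v ∈ r.support) : v ∈ A ∪ {c} := by
  have hvB : v ∉ B := by
    intro hvB
    have h₁ : c ∈ (r.takeUntil v hv).support := h.mem_support ha (.inl hvB) _ fun z hz =>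
      hrS z (r.support_takeUntil_subset_support hv hz)
    have h₂ : c ∈ (r.dropUntil v hv).reverse.support := h.mem_support hb (.inl hvB) _ fun z hz =>
      hrS z (r.support_dropUntil_subset_support hv (by simpa using hz))
    rw [Walk.support_reverse, List.mem_reverse] at h₂
    exact hcB (hr.eq_of_mem_support_takeUntil_dropUntil hv h₁ h₂ ▸ hvB)
  have := hrS v hv
  simp only [Set.mem_union] at this ⊢
  tauto

/-- A geodesic from the `A`-side to the `B`-side splits at `c` into geodesics on either side. -/
lemma eq_of_length_eq_dist (h : G.SeparatesIn c A B) (hcA : c ∉ A) (hcB : c ∉ B)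
    (hA : G.HasUniqueGeodesicsIn (A ∪ {c})) (hB : G.HasUniqueGeodesicsIn (B ∪ {c})) {x y : V}
    (hx : x ∈ A ∪ {c}) (hy : y ∈ B ∪ {c}) {p q : G.Walk x y} (hp : p.length = G.dist x y)
    (hq : q.length = G.dist x y) (hpS : ∀ v ∈ p.support, v ∈ A ∪ B ∪ {c})
    (hqS : ∀ v ∈ q.support, v ∈ A ∪ B ∪ {c}) : p = q := by
  have split (r : G.Walk x y) (hr : r.length = G.dist x y)
      (hrS : ∀ v ∈ r.support, v ∈ A ∪ B ∪ {c}) : ∃ hc : c ∈ r.support,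
        (r.takeUntil c hc).length = G.dist x c ∧ (∀ v ∈ (r.takeUntil c hc).support, v ∈ A ∪ {c}) ∧
        (r.dropUntil c hc).length = G.dist c y ∧
        (∀ v ∈ (r.dropUntil c hc).support, v ∈ B ∪ {c}) := by
    have hc := h.mem_support hx hy r hrS
    have h₁ := length_eq_dist_of_subwalk hr (r.isSubwalk_takeUntil hc)
    have h₂ := length_eq_dist_of_subwalk hr (r.isSubwalk_dropUntil hc)
    refine ⟨hc, h₁, fun v hv => h.mem_of_isPath hcB (Walk.isPath_of_length_eq_dist _ h₁)
      (fun z hz => hrS z (r.support_takeUntil_subset_support hc hz)) hx (.inr rfl) hv, h₂,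
      fun v hv => h.symm.mem_of_isPath hcA (Walk.isPath_of_length_eq_dist _ h₂)
      (fun z hz => ?_) (.inr rfl) hy hv⟩
    rw [Set.union_comm B A]
    exact hrS z (r.support_dropUntil_subset_support hc hz)
  obtain ⟨hcp, hp₁, hpA, hp₂, hpB⟩ := split p hp hpS
  obtain ⟨hcq, hq₁, hqA, hq₂, hqB⟩ := split q hq hqS
  rw [← p.take_spec hcp, ← q.take_spec hcq, hA _ _ hp₁ hq₁ hpA hqA, hB _ _ hp₂ hq₂ hpB hqB]

end SeparatesIn

lemma HasUniqueGeodesicsIn.union_of_separatesIn [DecidableEq V] {A B : Set V} {c : V}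
    (hcA : c ∉ A) (hcB : c ∉ B) (hsep : G.SeparatesIn c A B)
    (hA : G.HasUniqueGeodesicsIn (A ∪ {c})) (hB : G.HasUniqueGeodesicsIn (B ∪ {c})) :
    G.HasUniqueGeodesicsIn (A ∪ B ∪ {c}) := by
  intro x y p q hp hq hpS hqS
  have hx : x ∈ A ∪ {c} ∨ x ∈ B := by
    have := hpS x p.start_mem_support
    simp only [Set.mem_union] at this ⊢
    tauto
  have hy : y ∈ B ∪ {c} ∨ y ∈ A := by
    have := hpS y p.end_mem_support
    simp only [Set.mem_union] at this ⊢
    tauto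
  have hpB : ∀ v ∈ p.support, v ∈ B ∪ A ∪ {c} := Set.union_comm A B ▸ hpS
  have hqB : ∀ v ∈ q.support, v ∈ B ∪ A ∪ {c} := Set.union_comm A B ▸ hqS
  have hpPath := p.isPath_of_length_eq_dist hp
  have hqPath := q.isPath_of_length_eq_dist hq
  rcases hx with hx | hx <;> rcases hy with hy | hy
  · exact hsep.eq_of_length_eq_dist hcA hcB hA hB hx hy hp hq hpS hqS
  · exact hA p q hp hq (fun _ => hsep.mem_of_isPath hcB hpPath hpS hx (.inl hy))
      (fun _ => hsep.mem_of_isPath hcB hqPath hqS hx (.inl hy))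
  · exact hB p q hp hq (fun _ => hsep.symm.mem_of_isPath hcA hpPath hpB (.inl hx) hy)
      (fun _ => hsep.symm.mem_of_isPath hcA hqPath hqB (.inl hx) hy)
  · refine Walk.reverse_injective (hsep.eq_of_length_eq_dist hcA hcB hA hB (.inl hy) (.inl hx)
      (by simpa [dist_comm] using hp) (by simpa [dist_comm] using hq) (by simpa using hpS)
      (by simpa using hqS))

lemma IsCliqueSumOfCompletes.hasUniqueGeodesicsIn [DecidableEq V] {S : Set V}
    (hS : G.IsCliqueSumOfCompletes S) : G.HasUniqueGeodesicsIn S := by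
  induction hS with
  | complete S hS => exact IsClique.hasUniqueGeodesicsIn hS
  | sum A B c _ hcA hcB _ _ hsep _ _ hA hB => exact .union_of_separatesIn hcA hcB hsep hA hB

lemma IsBlockGraph.eq_of_length_eq_dist [DecidableEq V] (hG : G.IsBlockGraph) {x y : V}
    {p q : G.Walk x y} (hp : p.length = G.dist x y) (hq : q.length = G.dist x y) : p = q :=
  (hG x).hasUniqueGeodesicsIn p q hp hq (fun _ hv => (p.takeUntil _ hv).reachable)
    (fun _ hv => (q.takeUntil _ hv).reachable)

end SimpleGraph

namespace SimpleGraph.Walk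

variable {V : Type*} {G : SimpleGraph V}

lemma mem_support_iff_eq_start_or_exists_dart {x y z : V} (p : G.Walk x y) :
    z ∈ p.support ↔ z = x ∨ ∃ d ∈ p.darts, d.snd = z := by
  rw [← cons_map_snd_darts, List.mem_cons, List.mem_map]

variable [DecidableEq V]

/-- For a path `x = v₀, v₁, …, vₖ = y` this is the cycle `x ↦ y`, `vᵢ ↦ vᵢ₋₁`. -/
def cyclePerm : {x y : V} → G.Walk x y → Equiv.Perm V
  | _, _, .nil => 1
  | _, _, .cons (u := x) (v := v) _ q => q.cyclePerm * Equiv.swap x v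

lemma cyclePerm_cons {x v y : V} (h : G.Adj x v) (q : G.Walk v y) :
    (cons h q).cyclePerm = q.cyclePerm * Equiv.swap x v := rfl

lemma cyclePerm_apply_of_notMem_support {x y z : V} (p : G.Walk x y) (hz : z ∉ p.support) :
    p.cyclePerm z = z := by
  induction p with
  | nil => rfl
  | cons h q ih =>
    simp only [support_cons, List.mem_cons, not_or] at hz
    rw [cyclePerm_cons, Equiv.Perm.mul_apply,
      Equiv.swap_apply_of_ne_of_ne hz.1 (ne_of_mem_of_not_mem q.start_mem_support hz.2).symm]
    exact ih hz.2

lemma cyclePerm_apply_start {x y : V} (p : G.Walk x y) : p.cyclePerm x = y := by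
  induction p with
  | nil => rfl
  | cons h q ih => rwa [cyclePerm_cons, Equiv.Perm.mul_apply, Equiv.swap_apply_left]

lemma sign_cyclePerm [Fintype V] {x y : V} (p : G.Walk x y) :
    Equiv.Perm.sign p.cyclePerm = (-1) ^ p.length := by
  induction p with
  | nil => simp [cyclePerm]
  | cons h q ih =>
    rw [cyclePerm_cons, map_mul, ih, Equiv.Perm.sign_swap h.ne, length_cons, pow_succ]

lemma IsPath.cyclePerm_apply_snd {x y : V} {p : G.Walk x y} (hp : p.IsPath) {d : G.Dart}
    (hd : d ∈ p.darts) : p.cyclePerm d.snd = d.fst := by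
  induction p with
  | nil => simp at hd
  | @cons a b c h q ih =>
    rw [cons_isPath_iff] at hp
    rw [darts_cons, List.mem_cons] at hd
    rw [cyclePerm_cons, Equiv.Perm.mul_apply]
    rcases hd with rfl | hd
    · simpa using q.cyclePerm_apply_of_notMem_support hp.2
    · have hsnd : d.snd ∈ q.support.tail := by
        rw [← map_snd_darts]
        exact List.mem_map_of_mem hd
      have h₁ : d.snd ≠ a := ne_of_mem_of_not_mem (List.mem_of_mem_tail hsnd) hp.2
      have h₂ : d.snd ≠ b := by
        have := hp.1.support_nodup
        rw [← cons_tail_support, List.nodup_cons] at this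
        exact ne_of_mem_of_not_mem hsnd this.1
      rw [Equiv.swap_apply_of_ne_of_ne h₁ h₂]
      exact ih hp.1 hd

lemma IsPath.eq_cyclePerm {x y : V} {p : G.Walk x y} (hp : p.IsPath) {σ : Equiv.Perm V}
    (hx : σ x = y) (hdarts : ∀ d ∈ p.darts, σ d.snd = d.fst)
    (hfix : ∀ z ∉ p.support, σ z = z) : σ = p.cyclePerm := by
  ext z
  by_cases hz : z ∈ p.support
  · rcases p.mem_support_iff_eq_start_or_exists_dart.mp hz with rfl | ⟨d, hd, rfl⟩
    · rw [hx, cyclePerm_apply_start]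
    · rw [hdarts d hd, hp.cyclePerm_apply_snd hd]
  · rw [hfix z hz, cyclePerm_apply_of_notMem_support p hz]

lemma IsPath.cyclePerm_apply_eq_self_iff {x y z : V} {p : G.Walk x y} (hp : p.IsPath)
    (hzx : z ≠ x) : p.cyclePerm z = z ↔ z ∉ p.support := by
  refine ⟨fun hfix hz => ?_, p.cyclePerm_apply_of_notMem_support⟩
  obtain ⟨d, hd, rfl⟩ := (p.mem_support_iff_eq_start_or_exists_dart.mp hz).resolve_left hzx
  exact d.adj.ne ((hp.cyclePerm_apply_snd hd).symm.trans hfix)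

end SimpleGraph.Walk

namespace SimpleGraph

variable {V : Type*} [DecidableEq V] {G : SimpleGraph V} {x y : V}

/-- The permutations indexing the nonzero terms of the Leibniz expansion of the `(x, y)` entry
of the adjugate of a matrix supported on `G` and on the diagonal. -/
def IsAdjugatePerm (G : SimpleGraph V) (x y : V) (σ : Equiv.Perm V) : Prop :=
  σ x = y ∧ ∀ j, j ≠ x → σ j = j ∨ G.Adj (σ j) j

instance [Fintype V] [DecidableRel G.Adj] (x y : V) : DecidablePred (G.IsAdjugatePerm x y) :=
  fun _ => inferInstanceAs (Decidable (_ ∧ _))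

lemma Walk.IsPath.isAdjugatePerm_cyclePerm {p : G.Walk x y} (hp : p.IsPath) :
    G.IsAdjugatePerm x y p.cyclePerm := by
  refine ⟨p.cyclePerm_apply_start, fun j hjx => ?_⟩
  by_cases hj : j ∈ p.support
  · obtain ⟨d, hd, rfl⟩ := (p.mem_support_iff_eq_start_or_exists_dart.mp hj).resolve_left hjx
    exact .inr (hp.cyclePerm_apply_snd hd ▸ d.adj)
  · exact .inl (p.cyclePerm_apply_of_notMem_support hj)

/-- The orbit `y, σ y, σ² y, …` up to its first visit to `x` is a walk in `G`, since `σ` moves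
every point `u ≠ x` of it to a neighbour; its bypass is the path. -/
lemma IsAdjugatePerm.exists_isPath [Finite V] {σ : Equiv.Perm V} (hσ : G.IsAdjugatePerm x y σ) :
    ∃ w : G.Walk y x, w.IsPath ∧ ∀ d ∈ w.darts, σ d.fst = d.snd := by
  have walk : ∀ (m : ℕ) (u : V), (σ ^ m) u = x →
      ∃ w : G.Walk u x, ∀ d ∈ w.darts, σ d.fst = d.snd := by
    intro m
    induction m with
    | zero =>
      intro u hu
      rw [pow_zero, Equiv.Perm.one_apply] at hu
      subst hu
      exact ⟨.nil, by simp⟩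
    | succ m ih =>
      intro u hu
      by_cases hux : u = x
      · subst hux
        exact ⟨.nil, by simp⟩
      have hmove : σ u ≠ u := fun h =>
        hux (by rwa [Equiv.Perm.pow_apply_eq_self_of_apply_eq_self h] at hu)
      have hadj : G.Adj u (σ u) := ((hσ.2 u hux).resolve_left hmove).symm
      obtain ⟨w, hw⟩ := ih (σ u) (by rwa [pow_succ, Equiv.Perm.mul_apply] at hu)
      refine ⟨.cons hadj w, ?_⟩
      simpa using hw
  have hcycle : σ.SameCycle x y := ⟨1, by simpa using hσ.1⟩
  obtain ⟨m, hm⟩ := hcycle.symm.exists_nat_pow_eq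
  obtain ⟨w, hw⟩ := walk m y hm
  exact ⟨w.bypass, w.bypass_isPath, fun d hd => hw d (w.darts_bypass_subset_darts hd)⟩

variable [Fintype V]

lemma card_fixed_add_length_le {u : V} {σ : Equiv.Perm V} {w : G.Walk u x} (hw : w.IsPath)
    (hdarts : ∀ d ∈ w.darts, σ d.fst = d.snd) :
    #(σ.supportᶜ.erase x) + (w.length + 1) ≤ Fintype.card V ∧
      (#(σ.supportᶜ.erase x) + (w.length + 1) = Fintype.card V → ∀ z ∉ w.support, σ z = z) := by
  have hmoves : ∀ v ∈ w.support, v ≠ x → σ v ≠ v := by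
    intro v hv hvx
    rw [← w.map_fst_darts_append, List.mem_append, List.mem_singleton, List.mem_map] at hv
    obtain ⟨d, hd, rfl⟩ := hv.resolve_right hvx
    exact hdarts d hd ▸ d.adj.ne.symm
  have hdisj : Disjoint (σ.supportᶜ.erase x) w.support.toFinset := by
    refine Finset.disjoint_left.mpr fun v hv hvw => ?_
    simp only [mem_erase, mem_compl, Equiv.Perm.mem_support, not_not] at hv
    exact hmoves v (List.mem_toFinset.mp hvw) hv.1 hv.2
  have hcard : #(σ.supportᶜ.erase x ∪ w.support.toFinset) =
      #(σ.supportᶜ.erase x) + (w.length + 1) := by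
    rw [card_union_of_disjoint hdisj, List.toFinset_card_of_nodup hw.support_nodup,
      w.length_support]
  refine ⟨hcard ▸ card_le_univ _, fun heq z hz => ?_⟩
  have hz' := (eq_univ_of_card _ (hcard.trans heq)).symm ▸ mem_univ z
  simp only [mem_union, mem_erase, mem_compl, Equiv.Perm.mem_support, not_not,
    List.mem_toFinset, hz, or_false] at hz'
  exact hz'.2

lemma Walk.IsPath.card_fixed_cyclePerm_add_length {p : G.Walk x y} (hp : p.IsPath) :
    #(p.cyclePerm.supportᶜ.erase x) + (p.length + 1) = Fintype.card V := by
  have hfixed : p.cyclePerm.supportᶜ.erase x = univ \ p.support.toFinset := by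
    ext z
    by_cases hzx : z = x
    · simp [hzx]
    · simp [hzx, hp.cyclePerm_apply_eq_self_iff hzx]
  have hle : p.support.toFinset ⊆ univ := subset_univ _
  rw [hfixed, card_sdiff_of_subset hle, List.toFinset_card_of_nodup hp.support_nodup,
    p.length_support, card_univ, Nat.sub_add_cancel]
  simpa [List.toFinset_card_of_nodup hp.support_nodup] using card_le_univ p.support.toFinset

theorem IsAdjugatePerm.card_fixed_lt {σ : Equiv.Perm V} (hσ : G.IsAdjugatePerm x y σ)
    {p : G.Walk x y} (hp : p.length = G.dist x y)
    (hU : ∀ q : G.Walk x y, q.length = G.dist x y → q = p) (hne : σ ≠ p.cyclePerm) :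
    #(σ.supportᶜ.erase x) < #(p.cyclePerm.supportᶜ.erase x) := by
  have hpath := p.isPath_of_length_eq_dist hp
  obtain ⟨w, hw, hdarts⟩ := hσ.exists_isPath
  have hpw : p.length ≤ w.length := hp ▸ dist_comm (G := G) ▸ dist_le w
  obtain ⟨hle, hfix⟩ := card_fixed_add_length_le hw hdarts
  have hcyc := hpath.card_fixed_cyclePerm_add_length
  refine lt_of_le_of_ne (by omega) fun heq => hne ?_
  have hwp : w.reverse = p := hU _ (by rw [Walk.length_reverse]; omega)
  refine hpath.eq_cyclePerm hσ.1 (fun d hd => ?_) (fun z hz => hfix (by omega) z ?_)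
  · rw [← hwp, Walk.darts_reverse, List.mem_reverse, List.mem_map] at hd
    obtain ⟨e, he, rfl⟩ := hd
    exact hdarts e he
  · rwa [← hwp, Walk.support_reverse, List.mem_reverse] at hz

end SimpleGraph

section Exponents

variable {V : Type*} [Fintype V] [DecidableEq V]

noncomputable def cofactorExp (x : V) (σ : Equiv.Perm V) : Sym2 V →₀ ℕ :=
  ∑ j ∈ univ.erase x, Finsupp.single s(σ j, j) 1

lemma sum_cofactorExp_diag (x : V) (σ : Equiv.Perm V) :
    ∑ t, cofactorExp x σ s(t, t) = #(σ.supportᶜ.erase x) := by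
  have hdiag : ∀ j, ∑ t, Finsupp.single s(σ j, j) 1 s(t, t) = if σ j = j then 1 else 0 := by
    intro j
    rw [sum_eq_single j (fun t _ htj => Finsupp.single_eq_of_ne (by simp [htj])) (by simp)]
    simp [Finsupp.single_apply]
  simp only [cofactorExp, Finsupp.finsetSum_apply]
  rw [sum_comm, sum_congr rfl fun j _ => hdiag j, ← card_filter]
  congr 1
  ext j
  simp [and_comm]

end Exponents

lemma SimpleGraph.Walk.IsPath.cofactorExp_cyclePerm {n : ℕ} {G : SimpleGraph (Fin n)}
    {x y : Fin n} {p : G.Walk x y} (hp : p.IsPath) : cofactorExp x p.cyclePerm = spExp p := by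
  have hsplit : univ.erase x = p.support.tail.toFinset ∪ univ.filter (· ∉ p.support) := by
    have hx : x ∉ p.support.tail :=
      (List.nodup_cons.mp (p.cons_tail_support ▸ hp.support_nodup)).1
    ext j
    by_cases hj : j = x
    · simp [hj, hx]
    · simp only [mem_erase, mem_univ, mem_union, List.mem_toFinset, mem_filter]
      rw [← p.cons_tail_support, List.mem_cons]
      tauto
  have hdisj : Disjoint p.support.tail.toFinset (univ.filter (· ∉ p.support)) := by
    refine Finset.disjoint_left.mpr fun j hj hj' => ?_
    exact (mem_filter.mp hj').2 (List.mem_of_mem_tail (List.mem_toFinset.mp hj))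
  rw [cofactorExp, hsplit, sum_union hdisj, spExp]
  congr 1
  · rw [List.sum_toFinset _ (List.Nodup.of_cons (p.cons_tail_support ▸ hp.support_nodup)),
      ← Walk.map_snd_darts, List.map_map]
    congr 1
    exact List.map_congr_left fun d hd => by simp [hp.cyclePerm_apply_snd hd]
  · exact sum_congr rfl fun t ht => by
      rw [p.cyclePerm_apply_of_notMem_support (mem_filter.mp ht).2]

section Leibniz

variable {V R : Type*} [Fintype V] [DecidableEq V] [CommRing R] {x y : V} {σ : Equiv.Perm V}

lemma Matrix.prod_updateRow_single_of_apply_ne (M : Matrix V V R) (hσ : σ x ≠ y) :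
    ∏ i, M.updateRow y (Pi.single x 1) (σ i) i = 0 := by
  refine prod_eq_zero (mem_univ (σ.symm y)) ?_
  rw [Equiv.apply_symm_apply, Matrix.updateRow_self, Pi.single_eq_of_ne]
  exact fun h => hσ (by rw [← h, Equiv.apply_symm_apply])

lemma Matrix.prod_updateRow_single_of_apply_eq (M : Matrix V V R) (hσ : σ x = y) :
    ∏ i, M.updateRow y (Pi.single x 1) (σ i) i = ∏ i ∈ univ.erase x, M (σ i) i := by
  rw [← mul_prod_erase univ _ (mem_univ x), hσ, Matrix.updateRow_self, Pi.single_eq_same, one_mul]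
  refine prod_congr rfl fun i hi => ?_
  rw [Matrix.updateRow_ne fun h => (mem_erase.mp hi).1 (σ.injective (h.trans hσ.symm))]

variable {G : SimpleGraph V} [DecidableRel G.Adj] {K : Matrix V V (MvPolynomial (Sym2 V) R)}

lemma prod_erase_apply_eq_ite
    (hK : K = fun i j => if i = j ∨ G.Adj i j then X s(i, j) else 0) :
    ∏ i ∈ univ.erase x, K (σ i) i =
      if ∀ j, j ≠ x → σ j = j ∨ G.Adj (σ j) j then monomial (cofactorExp x σ) 1 else 0 := by
  subst hK
  split_ifs with hσ
  · rw [cofactorExp, monomial_sum_one]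
    exact prod_congr rfl fun i hi => if_pos (hσ i (mem_erase.mp hi).1)
  · simp only [not_forall, not_or] at hσ
    obtain ⟨j, hjx, hj, hadj⟩ := hσ
    exact prod_eq_zero (mem_erase.mpr ⟨hjx, mem_univ j⟩) (if_neg (not_or.mpr ⟨hj, hadj⟩))

theorem adjugate_apply_eq_sum_isAdjugatePerm
    (hK : K = fun i j => if i = j ∨ G.Adj i j then X s(i, j) else 0) (x y : V) :
    K.adjugate x y = ∑ σ ∈ univ.filter (G.IsAdjugatePerm x y),
      monomial (cofactorExp x σ) ((Equiv.Perm.sign σ : ℤ) : R) := by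
  rw [Matrix.adjugate_apply, Matrix.det_apply', sum_filter]
  refine sum_congr rfl fun σ _ => ?_
  by_cases hσ : σ x = y
  · rw [Matrix.prod_updateRow_single_of_apply_eq _ hσ, prod_erase_apply_eq_ite hK]
    simp only [SimpleGraph.IsAdjugatePerm, hσ, true_and]
    split_ifs
    · rw [← map_intCast (C : R →+* MvPolynomial (Sym2 V) R), C_mul_monomial, mul_one]
    · rw [mul_zero]
  · rw [Matrix.prod_updateRow_single_of_apply_ne _ hσ, mul_zero, if_neg fun h => hσ h.1]

end Leibniz

section SumMonomial

variable {ι σ R : Type*} [CommSemiring R] {s : Finset ι} {e : ι → σ →₀ ℕ} {c : ι → R}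

lemma MvPolynomial.coeff_sum_monomial_of_eq_imp {i₀ : ι} (hi₀ : i₀ ∈ s)
    (h : ∀ i ∈ s, e i = e i₀ → i = i₀) :
    coeff (e i₀) (∑ i ∈ s, monomial (e i) (c i)) = c i₀ := by
  classical
  rw [coeff_sum, sum_eq_single_of_mem i₀ hi₀ fun i hi hne => ?_, coeff_monomial, if_pos rfl]
  rw [coeff_monomial, if_neg fun heq => hne (h i hi heq)]

lemma MvPolynomial.exists_of_mem_support_sum_monomial {d : σ →₀ ℕ}
    (hd : d ∈ (∑ i ∈ s, monomial (e i) (c i)).support) : ∃ i ∈ s, e i = d := by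
  classical
  obtain ⟨i, hi, hd⟩ := mem_biUnion.mp (support_sum hd)
  exact ⟨i, hi, (mem_singleton.mp (support_monomial_subset hd)).symm⟩

end SumMonomial

/-- For a block graph `G` with loops at every vertex and generic symmetric matrix `K`
supported on `G`, the cofactor polynomial `f_{xy} = det K · (K⁻¹)_{xy}` (i.e. the
`(x,y)` entry of the adjugate) contains the shortest path monomial
`(-1)^{ℓ(x,y)} ∏_{(x',y') ∈ x↔y} k_{x'y'} ∏_{t ∉ x↔y} k_{tt}`, and this monomial has
strictly more diagonal factors `k_{tt}` than every other monomial of `f_{xy}`. -/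
theorem shortest_path_monomial_of_cofactor {n : ℕ} (G : SimpleGraph (Fin n))
    [DecidableRel G.Adj] (hG : G.IsBlockGraph) (x y : Fin n)
    (p : G.Walk x y) (hp : p.IsPath ∧ p.length = G.dist x y)
    (K : Matrix (Fin n) (Fin n) (MvPolynomial (Sym2 (Fin n)) ℝ))
    (hK : K = fun i j => if i = j ∨ G.Adj i j then X s(i, j) else 0) :
    MvPolynomial.coeff (spExp p) (K.adjugate x y) = (-1 : ℝ) ^ p.length ∧
      ∀ d' ∈ (K.adjugate x y).support, d' ≠ spExp p →
        (∑ t : Fin n, d' s(t, t)) < (∑ t : Fin n, (spExp p) s(t, t)) := by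
  obtain ⟨hpath, hlen⟩ := hp
  have hU (q : G.Walk x y) (hq : q.length = G.dist x y) : q = p :=
    hG.eq_of_length_eq_dist hq hlen
  have hlt : ∀ σ ∈ univ.filter (G.IsAdjugatePerm x y), σ ≠ p.cyclePerm →
      ∑ t, cofactorExp x σ s(t, t) < ∑ t, spExp p s(t, t) := fun σ hσ hne => by
    rw [← hpath.cofactorExp_cyclePerm, sum_cofactorExp_diag, sum_cofactorExp_diag]
    exact (mem_filter.mp hσ).2.card_fixed_lt hlen hU hne
  rw [adjugate_apply_eq_sum_isAdjugatePerm hK]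
  refine ⟨?_, fun d hd hne => ?_⟩
  · have hmem : p.cyclePerm ∈ univ.filter (G.IsAdjugatePerm x y) :=
      mem_filter.mpr ⟨mem_univ _, hpath.isAdjugatePerm_cyclePerm⟩
    rw [← hpath.cofactorExp_cyclePerm, coeff_sum_monomial_of_eq_imp hmem fun σ hσ heq =>
      by_contra fun hne => (hlt σ hσ hne).ne (by rw [heq, hpath.cofactorExp_cyclePerm]),
      p.sign_cyclePerm]
    push_cast
    rfl
  · obtain ⟨σ, hσ, rfl⟩ := exists_of_mem_support_sum_monomial hd
    exact hlt σ hσ fun h => hne (h ▸ hpath.cofactorExp_cyclePerm)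
end

section
/- Let K_n° be the complete graph on n vertices embedded with vertices on a circle, with a loop at each vertex, and define the weight w(σ_{ij}) of the edge (i,j) to be the number of edges of K_n° (including loops) that do not intersect (i,j), where two edges intersect if they share a vertex or cross in the circular embedding. Then for vertices i<j<k<l in circular order, w(σ_{ij}) + w(σ_{kl}) > w(σ_{ik}) + w(σ_{jl}); explicitly, the difference equals 2p_2p_4 + 2(p_2+p_4) + 2 where p_2 and p_4 are the numbers of vertices strictly between j,k and between l,i respectively on the circle. -/
/-!
A chord `(a, b)` with `a < b` meets no edge lying inside either of the two arcs it cuts off and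
meets every other edge, so its weight is `C(d, 2) + C(n - d, 2)` where `d = b - a` is its length
(an arc with `d - 1` interior vertices carries `C(d, 2)` edges, loops included). Writing `d₁, …, d₄`
for the lengths of the four sides of the quadrilateral `i j k l` (so `d₂ = p₂ + 1`, `d₄ = p₄ + 1`),
the claim becomes a quadratic identity in the `dₘ` whose defect is `2 d₂ d₄`.
-/

open Classical in
/-- Two chords `(i,j)` and `(k,l)` (with `i < j`, `k < l`) of the circularly embedded
complete graph cross each other. -/
def crossChords {n : ℕ} (i j k l : Fin n) : Prop :=
  (i < k ∧ k < j ∧ j < l) ∨ (k < i ∧ i < l ∧ l < j)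

open Classical in
/-- Two edges (or loops) of the circularly embedded complete graph with loops `K_n°`
intersect: they share a vertex or cross in the embedding. -/
def edgesIntersect {n : ℕ} (e f : Sym2 (Fin n)) : Prop :=
  (∃ v, v ∈ e ∧ v ∈ f) ∨
    crossChords (min e.out.1 e.out.2) (max e.out.1 e.out.2)
      (min f.out.1 f.out.2) (max f.out.1 f.out.2) ∨
    crossChords (min f.out.1 f.out.2) (max f.out.1 f.out.2)
      (min e.out.1 e.out.2) (max e.out.1 e.out.2)

open Classical in
/-- The weight of the edge `e`: the number of edges (including loops) of `K_n°`
that do not intersect `e`. -/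
noncomputable def edgeWeight {n : ℕ} (e : Sym2 (Fin n)) : ℕ :=
  (Finset.univ.filter (fun f : Sym2 (Fin n) => ¬ edgesIntersect e f)).card

theorem Sym2.min_out_eq_inf {α : Type*} [LinearOrder α] (e : Sym2 α) :
    min e.out.1 e.out.2 = e.inf := by
  conv_rhs => rw [← Quot.out_eq e]
  rfl

theorem Sym2.max_out_eq_sup {α : Type*} [LinearOrder α] (e : Sym2 α) :
    max e.out.1 e.out.2 = e.sup := by
  conv_rhs => rw [← Quot.out_eq e]
  rfl

theorem Finset.disjoint_sym2 {α : Type*} {s t : Finset α} (h : Disjoint s t) :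
    Disjoint s.sym2 t.sym2 :=
  Finset.disjoint_left.2 fun e hs ht =>
    Finset.disjoint_left.1 h (Finset.mem_sym2_iff.1 hs _ e.out_fst_mem)
      (Finset.mem_sym2_iff.1 ht _ e.out_fst_mem)

theorem edgesIntersect_iff {n : ℕ} (e f : Sym2 (Fin n)) :
    edgesIntersect e f ↔ (∃ v, v ∈ e ∧ v ∈ f) ∨
      crossChords e.inf e.sup f.inf f.sup ∨ crossChords f.inf f.sup e.inf e.sup := by
  simp only [edgesIntersect, Sym2.min_out_eq_inf, Sym2.max_out_eq_sup]

theorem not_edgesIntersect_mk_iff {n : ℕ} {a b : Fin n} (hab : a < b) (f : Sym2 (Fin n)) :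
    ¬ edgesIntersect s(a, b) f ↔ f ∈ (Finset.Ioo a b).sym2 ∨ f ∈ (Finset.Icc a b)ᶜ.sym2 := by
  induction f with | _ x y
  simp only [edgesIntersect_iff, crossChords, Sym2.inf_mk, Sym2.sup_mk, Sym2.mem_iff,
    Finset.mk_mem_sym2_iff, Finset.mem_Ioo, Finset.mem_compl, Finset.mem_Icc]
  simp only [or_and_right, exists_or, exists_eq_left]
  simp only [Fin.lt_def, Fin.le_def, Fin.ext_iff, Fin.coe_min, Fin.coe_max] at *
  omega

theorem edgeWeight_mk_of_lt {n : ℕ} {a b : Fin n} (hab : a < b) :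
    edgeWeight s(a, b) = (b - a : ℕ).choose 2 + (n - (b - a)).choose 2 := by
  classical
  have hfilter : Finset.univ.filter (fun f => ¬ edgesIntersect s(a, b) f) =
      (Finset.Ioo a b).sym2 ∪ (Finset.Icc a b)ᶜ.sym2 := by
    ext f
    rw [Finset.mem_filter, Finset.mem_union, not_edgesIntersect_mk_iff hab]
    simp only [Finset.mem_univ, true_and]
  have hdisj : Disjoint (Finset.Ioo a b) (Finset.Icc a b)ᶜ :=
    disjoint_compl_right_iff.2 Finset.Ioo_subset_Icc_self
  rw [edgeWeight, hfilter, Finset.card_union_of_disjoint (Finset.disjoint_sym2 hdisj),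
    Finset.card_sym2, Finset.card_sym2, Fin.card_Ioo, Finset.card_compl, Fin.card_Icc,
    Fintype.card_fin]
  have hb := b.isLt
  rw [Fin.lt_def] at hab
  congr 2 <;> omega

theorem choose_two_quadrilateral (a b c d : ℕ) :
    a.choose 2 + (b + c + d).choose 2 + (c.choose 2 + (a + b + d).choose 2) =
      (a + b).choose 2 + (c + d).choose 2 + ((b + c).choose 2 + (a + d).choose 2) +
        2 * b * d := by
  rw [← Nat.cast_inj (R := ℚ)]
  push_cast [Nat.cast_choose_two]
  ring

theorem choose_two_chord_exchange {i j k l n : ℕ} (hij : i < j) (hjk : j < k) (hkl : k < l)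
    (hln : l < n) :
    (j - i).choose 2 + (n - (j - i)).choose 2 + ((l - k).choose 2 + (n - (l - k)).choose 2) =
      (k - i).choose 2 + (n - (k - i)).choose 2 + ((l - j).choose 2 + (n - (l - j)).choose 2) +
        2 * (k - j) * (n - (l - i)) := by
  have h := choose_two_quadrilateral (j - i) (k - j) (l - k) (n - (l - i))
  rwa [show k - j + (l - k) + (n - (l - i)) = n - (j - i) by omega,
    show j - i + (k - j) + (n - (l - i)) = n - (l - k) by omega,
    show j - i + (k - j) = k - i by omega, show l - k + (n - (l - i)) = n - (k - i) by omega,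
    show k - j + (l - k) = l - j by omega, show j - i + (n - (l - i)) = n - (l - j) by omega] at h

theorem Fin.card_filter_lt_and_lt_add_one {n : ℕ} {a b : Fin n} (hab : a < b) :
    (Finset.univ.filter fun v : Fin n => a < v ∧ v < b).card + 1 = b - a := by
  have h : Finset.univ.filter (fun v : Fin n => a < v ∧ v < b) = Finset.Ioo a b := by
    ext v
    simp only [Finset.mem_filter, Finset.mem_univ, true_and, Finset.mem_Ioo]
  rw [h, Fin.card_Ioo]
  rw [Fin.lt_def] at hab
  omega

theorem Fin.card_filter_lt_or_lt_add_one {n : ℕ} {a b : Fin n} (hab : a ≤ b) :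
    (Finset.univ.filter fun v : Fin n => b < v ∨ v < a).card + 1 = n - (b - a) := by
  have h : Finset.univ.filter (fun v : Fin n => b < v ∨ v < a) = (Finset.Icc a b)ᶜ := by
    ext v
    simp only [Finset.mem_filter, Finset.mem_univ, true_and, Finset.mem_compl, Finset.mem_Icc]
    omega
  rw [h, Finset.card_compl, Fin.card_Icc, Fintype.card_fin]
  have hb := b.isLt
  rw [Fin.le_def] at hab
  omega

/-- For `i < j < k < l` on the circle,
`w(σ_{ij}) + w(σ_{kl}) = w(σ_{ik}) + w(σ_{jl}) + 2p₂p₄ + 2(p₂+p₄) + 2 > w(σ_{ik}) + w(σ_{jl})`,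
where `p₂`, `p₄` are the numbers of vertices strictly between `j,k` resp. `l,i`. -/
theorem weight_nonintersecting_gt {n : ℕ} (i j k l : Fin n)
    (hij : i < j) (hjk : j < k) (hkl : k < l) :
    edgeWeight s(i, j) + edgeWeight s(k, l) =
        edgeWeight s(i, k) + edgeWeight s(j, l) +
          (2 * (Finset.univ.filter (fun v : Fin n => j < v ∧ v < k)).card *
              (Finset.univ.filter (fun v : Fin n => l < v ∨ v < i)).card +
            2 * ((Finset.univ.filter (fun v : Fin n => j < v ∧ v < k)).card +
              (Finset.univ.filter (fun v : Fin n => l < v ∨ v < i)).card) + 2) ∧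
      edgeWeight s(i, k) + edgeWeight s(j, l) < edgeWeight s(i, j) + edgeWeight s(k, l) := by
  set p₂ := (Finset.univ.filter (fun v : Fin n => j < v ∧ v < k)).card
  set p₄ := (Finset.univ.filter (fun v : Fin n => l < v ∨ v < i)).card
  have hik : i < k := hij.trans hjk
  have hjl : j < l := hjk.trans hkl
  have key : edgeWeight s(i, j) + edgeWeight s(k, l) =
      edgeWeight s(i, k) + edgeWeight s(j, l) + 2 * (p₂ + 1) * (p₄ + 1) := by
    rw [edgeWeight_mk_of_lt hij, edgeWeight_mk_of_lt hkl, edgeWeight_mk_of_lt hik,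
      edgeWeight_mk_of_lt hjl, Fin.card_filter_lt_and_lt_add_one hjk,
      Fin.card_filter_lt_or_lt_add_one (hik.trans hkl).le]
    exact choose_two_chord_exchange hij hjk hkl l.isLt
  constructor
  · rw [key]; ring
  · rw [key]
    exact Nat.lt_add_of_pos_right (by positivity)
end

section
/- Let G=([n],E) be a graph and Σ a positive definite matrix with K=Σ^{-1} supported on G. If (A,B,C) is a partition of [n] with C separating A from B in G, then rank(Σ_{A∪C, B∪C}) ≤ |C|; consequently all (|C|+1)×(|C|+1) minors of Σ_{A∪C,B∪C} vanish and CI_G ⊆ P_G. -/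
/-!
Write `K = Σ⁻¹`. Separation means no edge joins `A` to `B`, so `K_{A,B} = 0`, and the rows of
`K Σ = 1` indexed by `A` and restricted to the columns `B ∪ C` give
`K_{A, A∪C} Σ_{A∪C, B∪C} = 0`. The left factor contains the invertible block `K_{A,A}` of the
positive definite `K`, so it has rank `|A|`, and Sylvester's inequality leaves at most
`|A ∪ C| - |A| = |C|` for the rank of `Σ_{A∪C, B∪C}`.
-/

open Matrix

theorem SimpleGraph.not_adj_of_forall_walk_meets {V : Type*} {G : SimpleGraph V} {a b : V}
    {C : Finset V} (hsep : ∀ w : G.Walk a b, ∃ x ∈ C, x ∈ w.support) (ha : a ∉ C)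
    (hb : b ∉ C) : ¬ G.Adj a b := by
  intro hab
  obtain ⟨x, hxC, hx⟩ := hsep hab.toWalk
  rcases List.mem_pair.mp (by simpa using hx) with rfl | rfl
  exacts [ha hxC, hb hxC]

namespace Matrix

variable {l m n o p : Type*}

theorem submatrix_mul_submatrix_of_apply_eq_zero {R : Type*} [CommSemiring R] [Fintype m]
    (K : Matrix l m R) (S : Matrix m o R) (T : Finset m) (r : n → l) (c : p → o)
    (hK : ∀ i, ∀ j ∉ T, K (r i) j = 0) :
    K.submatrix r ((↑) : T → m) * S.submatrix ((↑) : T → m) c = (K * S).submatrix r c := by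
  ext i k
  simp only [mul_apply, submatrix_apply]
  rw [Finset.sum_coe_sort T (fun j => K (r i) j * S j (c k))]
  exact Finset.sum_subset (Finset.subset_univ T) fun j _ hj => by rw [hK i j hj, zero_mul]

theorem PosDef.card_le_rank_submatrix {𝕜 : Type*} [Field 𝕜] [PartialOrder 𝕜] [StarRing 𝕜]
    [Fintype l] [Fintype m] [DecidableEq l] {K : Matrix n n 𝕜} (hK : K.PosDef)
    {r : l → n} (hr : Function.Injective r) (c : m → n) (e : l → m) (hce : c ∘ e = r) :
    Fintype.card l ≤ (K.submatrix r c).rank := by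
  have hblock : (K.submatrix r c).submatrix id e = K.submatrix r r := by
    rw [submatrix_submatrix, Function.comp_id, hce]
  calc Fintype.card l = (K.submatrix r r).rank := (rank_of_isUnit _ (hK.submatrix hr).isUnit).symm
    _ ≤ (K.submatrix r c).rank := hblock ▸ rank_submatrix_le _ id e

theorem det_submatrix_eq_zero_of_rank_lt {K : Type*} [Field K] [Fintype o] {k : ℕ}
    (M : Matrix m o K) (f : Fin k → m) (g : Fin k → o) (h : M.rank < k) :
    (M.submatrix f g).det = 0 := by
  by_contra hdet
  have hfull := rank_of_det_ne_zero hdet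
  have := rank_submatrix_le M f g
  rw [Fintype.card_fin] at hfull
  omega

end Matrix

/-- If `Σ` is positive definite with `K = Σ⁻¹` supported on `G` and `(A, B, C)` is a
partition of the vertices with `C` separating `A` from `B`, then
`rank Σ_{A∪C, B∪C} ≤ |C|`; consequently all `(|C|+1) × (|C|+1)` minors of
`Σ_{A∪C, B∪C}` vanish. -/
theorem rank_submatrix_le_of_separation {n : ℕ} (G : SimpleGraph (Fin n))
    (S : Matrix (Fin n) (Fin n) ℝ) (hS : S.PosDef)
    (hsupp : ∀ i j : Fin n, i ≠ j → ¬ G.Adj i j → S⁻¹ i j = 0)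
    (A B C : Finset (Fin n))
    (hAB : Disjoint A B) (hAC : Disjoint A C) (hBC : Disjoint B C)
    (hcover : A ∪ B ∪ C = Finset.univ)
    (hsep : ∀ a ∈ A, ∀ b ∈ B, ∀ w : G.Walk a b, ∃ x ∈ C, x ∈ w.support) :
    Matrix.rank (S.submatrix (fun a : ↥(A ∪ C) => (a : Fin n))
        (fun b : ↥(B ∪ C) => (b : Fin n))) ≤ C.card ∧
      ∀ (f : Fin (C.card + 1) → ↥(A ∪ C)) (g : Fin (C.card + 1) → ↥(B ∪ C)),
        (S.submatrix (fun p : Fin (C.card + 1) => ((f p : Fin n)))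
          (fun q : Fin (C.card + 1) => ((g q : Fin n)))).det = 0 := by
  classical
  have hKS : S⁻¹ * S = 1 := nonsing_inv_mul S (isUnit_iff_isUnit_det S |>.mp hS.isUnit)
  have hK : ∀ a ∈ A, ∀ j ∉ A ∪ C, S⁻¹ a j = 0 := by
    intro a ha j hj
    have hjB : j ∈ B := by
      have hj' : j ∈ A ∪ B ∪ C := hcover ▸ Finset.mem_univ j
      simp only [Finset.mem_union] at hj hj'
      tauto
    exact hsupp a j (fun h => Finset.disjoint_left.mp hAB ha (h ▸ hjB))
      (SimpleGraph.not_adj_of_forall_walk_meets (hsep a ha j hjB)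
        (Finset.disjoint_left.mp hAC ha) (Finset.disjoint_left.mp hBC hjB))
  have hLM : S⁻¹.submatrix ((↑) : A → Fin n) ((↑) : ↥(A ∪ C) → Fin n) *
      S.submatrix ((↑) : ↥(A ∪ C) → Fin n) ((↑) : ↥(B ∪ C) → Fin n) = 0 := by
    rw [submatrix_mul_submatrix_of_apply_eq_zero _ _ _ _ _ fun i : A => hK i i.2, hKS]
    ext a b
    exact one_apply_ne fun h => Finset.disjoint_left.mp
      (Finset.disjoint_union_right.mpr ⟨hAB, hAC⟩) a.2 (h ▸ b.2)
  have hsylvester := rank_add_rank_le_card_of_mul_eq_zero hLM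
  have hrankL := hS.inv.card_le_rank_submatrix (r := ((↑) : A → Fin n)) Subtype.coe_injective
    ((↑) : ↥(A ∪ C) → Fin n) (fun a : A => ⟨a, Finset.mem_union_left C a.2⟩) rfl
  have hrank : Matrix.rank (S.submatrix ((↑) : ↥(A ∪ C) → Fin n) ((↑) : ↥(B ∪ C) → Fin n))
      ≤ C.card := by
    rw [Fintype.card_coe, Finset.card_union_of_disjoint hAC] at hsylvester
    rw [Fintype.card_coe] at hrankL
    omega
  exact ⟨hrank, fun f g => det_submatrix_eq_zero_of_rank_lt _ f g (Nat.lt_succ_of_le hrank)⟩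
end
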